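/- arXiv:2103.03751 — 6 statements merged into one kernel-verified Lean document; each statement's English description precedes it below -/
import Mathlib

section
/- For 0 < α < 1 and β > 0, the random variable S_{α,β} = (S_α)^{−β}, where S_α is a positive stable random variable with Laplace transform E[e^{−t S_α}] = e^{−t^α}, has moments E[S_{α,β}^s] = Γ(1 + sβ/α)/Γ(1 + sβ) for all real s > −α/β. -/
open Real Set MeasureTheory ENNReal



lemma rsm_measurable_rpow_const (c : ℝ) : Measurable fun x : ℝ => x ^ c := by
  apply measurable_of_continuousOn_compl_singleton (0 : ℝ)
  intro x hx
  exact (Real.continuousAt_rpow_const x c (Or.inl hx)).continuousWithinAt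




lemma rsm_lint_gamma_mul {q b : ℝ} (hq : -1 < q) (hb : 0 < b) :
    ∫⁻ x in Ioi (0:ℝ), ENNReal.ofReal (x ^ q * Real.exp (-(b * x))) =
      ENNReal.ofReal (b ^ (-(q + 1)) * Real.Gamma (q + 1)) := by
  have hint : IntegrableOn (fun x : ℝ => x ^ q * Real.exp (-b * x ^ (1:ℝ))) (Ioi 0) :=
    integrableOn_rpow_mul_exp_neg_mul_rpow hq one_pos hb
  have hint' : IntegrableOn (fun x : ℝ => x ^ q * Real.exp (-(b * x))) (Ioi 0) := by
    refine hint.congr_fun (fun x hx => by dsimp only; rw [Real.rpow_one]; ring_nf) measurableSet_Ioi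
  rw [← ofReal_integral_eq_lintegral_ofReal hint' ?_]
  · have := integral_rpow_mul_exp_neg_mul_rpow one_pos hq hb
    rw [show (∫ x in Ioi (0:ℝ), x ^ q * Real.exp (-(b * x))) =
        ∫ x in Ioi (0:ℝ), x ^ q * Real.exp (-b * x ^ (1:ℝ)) from
      setIntegral_congr_fun measurableSet_Ioi (fun x hx => by rw [Real.rpow_one]; ring_nf), this]
    rw [div_one, one_div_one, mul_one, div_one]
  · filter_upwards [ae_restrict_mem measurableSet_Ioi] with x hx
    have : (0:ℝ) < x := hx
    positivity

lemma rsm_lint_Ioi_rpow {a c : ℝ} (ha : a < -1) (hc : 0 < c) :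
    ∫⁻ t in Ioi c, ENNReal.ofReal (t ^ a) = ENNReal.ofReal (-c ^ (a + 1) / (a + 1)) := by
  rw [← ofReal_integral_eq_lintegral_ofReal (integrableOn_Ioi_rpow_of_lt ha hc) ?_,
    integral_Ioi_rpow_of_lt ha hc]
  filter_upwards [ae_restrict_mem measurableSet_Ioi] with x hx
  have : (0:ℝ) < x := hc.trans hx
  positivity

lemma rsm_lint_exp_Ioo {A v : ℝ} (hA : 0 ≤ A) (hv : 0 < v) :
    ∫⁻ u in Ioo (0:ℝ) v, ENNReal.ofReal (A * Real.exp (-u)) =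
      ENNReal.ofReal (A * (1 - Real.exp (-v))) := by
  have hint : IntegrableOn (fun u : ℝ => A * Real.exp (-u)) (Ioo 0 v) := by
    have : Continuous fun u : ℝ => A * Real.exp (-u) := by continuity
    exact (this.integrableOn_Ioc).mono_set Ioo_subset_Ioc_self
  rw [← ofReal_integral_eq_lintegral_ofReal hint (Filter.Eventually.of_forall fun u => by positivity)]
  congr 1
  rw [MeasureTheory.integral_const_mul]
  congr 1
  rw [← integral_Ioc_eq_integral_Ioo, ← intervalIntegral.integral_of_le hv.le]
  rw [intervalIntegral.integral_comp_neg Real.exp, integral_exp]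
  simp


-- integrability of x^q exp(-x^p) on Ioi 0, any p>0
lemma rsm_integrableOn_rpow_exp {p q : ℝ} (hp : 0 < p) (hq : -1 < q) :
    IntegrableOn (fun x : ℝ => x ^ q * Real.exp (-x ^ p)) (Ioi 0) := by
  have hs : 0 < (q + 1) / p := div_pos (by linarith) hp
  have hγ : IntegrableOn (fun y : ℝ => y ^ ((q + 1) / p - 1) * Real.exp (-y)) (Ioi 0) := by
    have := Real.GammaIntegral_convergent hs
    refine this.congr_fun (fun x hx => by ring) measurableSet_Ioi
  have h := (integrableOn_Ioi_comp_rpow_iff' (fun y => y ^ ((q + 1) / p - 1) * Real.exp (-y))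
      hp.ne').mpr hγ
  refine h.congr_fun (fun x hx => ?_) measurableSet_Ioi
  have hx0 : (0:ℝ) < x := hx
  dsimp only
  rw [smul_eq_mul, ← Real.rpow_mul hx0.le, ← mul_assoc, ← Real.rpow_add hx0]
  congr 2
  field_simp
  ring

lemma rsm_lint_gamma {p q : ℝ} (hp : 0 < p) (hq : -1 < q) :
    ∫⁻ x in Ioi (0:ℝ), ENNReal.ofReal (x ^ q * Real.exp (-x ^ p)) =
      ENNReal.ofReal ((1 / p) * Real.Gamma ((q + 1) / p)) := by
  rw [← ofReal_integral_eq_lintegral_ofReal (rsm_integrableOn_rpow_exp hp hq) ?_,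
    integral_rpow_mul_exp_neg_rpow hp hq]
  filter_upwards [ae_restrict_mem measurableSet_Ioi] with x hx
  have : (0:ℝ) < x := hx
  positivity


lemma rsm_key_neg {p γ c : ℝ} (hp : 0 < p) (hpγ : p < γ) (hc : 0 < c) :
    ∫⁻ t in Ioi (0:ℝ), ENNReal.ofReal (t ^ (-p - 1) * (1 - Real.exp (-(c * t ^ γ)))) =
      ENNReal.ofReal (c ^ (p / γ) * Real.Gamma (1 - p / γ) / p) := by
  have hγ : 0 < γ := hp.trans hpγ
  set F : ℝ × ℝ → ℝ≥0∞ := fun z =>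
    ({z : ℝ × ℝ | 0 < z.2 ∧ z.2 < c * z.1 ^ γ}).indicator
      (fun z => ENNReal.ofReal (z.1 ^ (-p - 1) * Real.exp (-z.2))) z with hF
  have hSmeas : MeasurableSet {z : ℝ × ℝ | 0 < z.2 ∧ z.2 < c * z.1 ^ γ} := by
    apply MeasurableSet.inter
    · exact measurableSet_lt measurable_const measurable_snd
    · exact measurableSet_lt measurable_snd (((rsm_measurable_rpow_const γ).comp measurable_fst).const_mul c)
  have hFmeas : Measurable F := by
    apply Measurable.indicator _ hSmeas
    exact (((rsm_measurable_rpow_const _).comp measurable_fst).mul (measurable_snd.neg.exp)).ennreal_ofReal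
  -- step 1
  have step1 : ∀ t : ℝ, 0 < t →
      ∫⁻ u in Ioi (0:ℝ), F (t, u) =
        ENNReal.ofReal (t ^ (-p - 1) * (1 - Real.exp (-(c * t ^ γ)))) := by
    intro t ht
    have hv : 0 < c * t ^ γ := mul_pos hc (rpow_pos_of_pos ht γ)
    have : ∀ u : ℝ, F (t, u) =
        (Ioo (0:ℝ) (c * t ^ γ)).indicator
          (fun u => ENNReal.ofReal (t ^ (-p - 1) * Real.exp (-u))) u := by
      intro u
      simp only [hF, Set.indicator_apply, mem_setOf_eq, mem_Ioo]
    simp_rw [this]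
    rw [lintegral_indicator measurableSet_Ioo, Measure.restrict_restrict measurableSet_Ioo,
      Set.inter_eq_self_of_subset_left (Set.Ioo_subset_Ioi_self)]
    exact rsm_lint_exp_Ioo (le_of_lt (rpow_pos_of_pos ht _)) hv
  -- step 3
  have step3 : ∀ u : ℝ, 0 < u →
      ∫⁻ t in Ioi (0:ℝ), F (t, u) =
        ENNReal.ofReal ((c ^ (p / γ) / p) * (u ^ (-(p / γ)) * Real.exp (-(1 * u)))) := by
    intro u hu
    set a : ℝ := (u / c) ^ (1 / γ) with ha
    have ha0 : 0 < a := rpow_pos_of_pos (div_pos hu hc) _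
    have key : ∀ t : ℝ, t ∈ Ioi (0:ℝ) → (F (t, u) =
        (Ioi a).indicator (fun t => ENNReal.ofReal (Real.exp (-u)) *
          ENNReal.ofReal (t ^ (-p - 1))) t) := by
      intro t ht
      have ht0 : (0:ℝ) < t := ht
      have hiff : (u < c * t ^ γ) ↔ a < t := by
        rw [← div_lt_iff₀' hc, ha]
        constructor
        · intro h
          have h2 := Real.rpow_lt_rpow (le_of_lt (div_pos hu hc)) h
            (by positivity : (0:ℝ) < 1 / γ)
          rwa [← Real.rpow_mul ht0.le, mul_one_div, div_self hγ.ne', Real.rpow_one] at h2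
        · intro h
          have h2 := Real.rpow_lt_rpow (le_of_lt ha0) h hγ
          rwa [ha, ← Real.rpow_mul (le_of_lt (div_pos hu hc)), one_div_mul_cancel hγ.ne',
            Real.rpow_one] at h2
      simp only [hF, Set.indicator_apply, mem_setOf_eq, mem_Ioi, hu, true_and, hiff]
      by_cases h : a < t
      · simp only [h, if_true, ← ENNReal.ofReal_mul (Real.exp_nonneg _)]
        rw [mul_comm]
      · simp [h]
    rw [setLIntegral_congr_fun measurableSet_Ioi key,
      lintegral_indicator measurableSet_Ioi, Measure.restrict_restrict measurableSet_Ioi,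
      Set.inter_eq_self_of_subset_left (Ioi_subset_Ioi ha0.le),
      lintegral_const_mul _ ((rsm_measurable_rpow_const _).ennreal_ofReal),
      rsm_lint_Ioi_rpow (by linarith) ha0, ← ENNReal.ofReal_mul (Real.exp_nonneg _)]
    congr 1
    have h1 : -p - 1 + 1 = -p := by ring
    rw [h1, neg_div_neg_eq, ha, ← Real.rpow_mul (le_of_lt (div_pos hu hc)),
      Real.div_rpow hu.le hc.le, one_mul]
    have h2 : 1 / γ * (-p) = -(p / γ) := by field_simp
    rw [h2, Real.rpow_neg hc.le]
    field_simp
  calc ∫⁻ t in Ioi (0:ℝ), ENNReal.ofReal (t ^ (-p - 1) * (1 - Real.exp (-(c * t ^ γ))))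
      = ∫⁻ t in Ioi (0:ℝ), ∫⁻ u in Ioi (0:ℝ), F (t, u) :=
        (setLIntegral_congr_fun measurableSet_Ioi
          (fun t ht => (step1 t ht).symm))
    _ = ∫⁻ u in Ioi (0:ℝ), ∫⁻ t in Ioi (0:ℝ), F (t, u) := by
        exact lintegral_lintegral_swap hFmeas.aemeasurable
    _ = ∫⁻ u in Ioi (0:ℝ), ENNReal.ofReal (c ^ (p / γ) / p) *
          ENNReal.ofReal (u ^ (-(p / γ)) * Real.exp (-(1 * u))) := by
        refine setLIntegral_congr_fun measurableSet_Ioi (fun u hu => ?_)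
        rw [step3 u hu, ENNReal.ofReal_mul (by positivity)]
    _ = ENNReal.ofReal (c ^ (p / γ) / p) *
          ∫⁻ u in Ioi (0:ℝ), ENNReal.ofReal (u ^ (-(p / γ)) * Real.exp (-(1 * u))) := by
        exact lintegral_const_mul _ (((rsm_measurable_rpow_const _).mul
          (Measurable.exp (Measurable.neg (measurable_id.const_mul 1)))).ennreal_ofReal)
    _ = ENNReal.ofReal (c ^ (p / γ) * Real.Gamma (1 - p / γ) / p) := by
        rw [rsm_lint_gamma_mul (by have := (div_lt_one hγ).mpr hpγ; linarith : (-1:ℝ) < -(p/γ)) one_pos,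
          ← ENNReal.ofReal_mul (by positivity)]
        congr 1
        rw [Real.one_rpow, one_mul]
        rw [show -(p/γ) + 1 = 1 - p/γ by ring]
        ring

section Helpers

lemma rsm_conclude {Ω : Type*} [MeasureSpace Ω] [IsProbabilityMeasure (volume : Measure Ω)]
    {g : Ω → ℝ} (hg : Measurable g) (h0 : ∀ ω, 0 ≤ g ω) {c : ℝ} (hc : 0 ≤ c)
    (h : ∫⁻ ω, ENNReal.ofReal (g ω) = ENNReal.ofReal c) :
    Integrable g ∧ ∫ ω, g ω = c := by
  have hfin : HasFiniteIntegral g := by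
    rw [hasFiniteIntegral_iff_ofReal (ae_of_all _ h0), h]
    exact ENNReal.ofReal_lt_top
  refine ⟨⟨hg.aestronglyMeasurable, hfin⟩, ?_⟩
  rw [integral_eq_lintegral_of_nonneg_ae (ae_of_all _ h0) hg.aestronglyMeasurable, h,
    ENNReal.toReal_ofReal hc]

end Helpers

/-- moments of the reciprocal stable law `S_{α,β} = S_α^{−β}`, where `S_α`
is the positive stable random variable with Laplace transform `E[e^{−t S_α}] = e^{−t^α}`. -/
theorem reciprocal_stable_moments {Ω : Type*} [MeasureSpace Ω]
    [IsProbabilityMeasure (volume : Measure Ω)]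
    (α β : ℝ) (hα0 : 0 < α) (hα1 : α < 1) (hβ : 0 < β)
    (S : Ω → ℝ) (hSmeas : Measurable S) (hSpos : ∀ ω, 0 < S ω)
    (hLaplace : ∀ t : ℝ, 0 ≤ t →
        ∫ ω, Real.exp (-(t * S ω)) = Real.exp (-(t ^ α)))
    (s : ℝ) (hs : -(α / β) < s) :
    Integrable (fun ω => S ω ^ (-(β * s))) ∧
      ∫ ω, S ω ^ (-(β * s)) =
        Real.Gamma (1 + s * β / α) / Real.Gamma (1 + s * β) := by
  -- Laplace transform, lintegral version
  have hexp_int : ∀ t : ℝ, 0 ≤ t → Integrable (fun ω => Real.exp (-(t * S ω))) := by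
    intro t ht
    refine Integrable.mono' (integrable_const 1)
      ((hSmeas.const_mul t).neg.exp).aestronglyMeasurable (ae_of_all _ fun ω => ?_)
    rw [Real.norm_eq_abs, abs_of_pos (Real.exp_pos _)]
    exact Real.exp_le_one_iff.mpr (neg_nonpos.mpr (mul_nonneg ht (hSpos ω).le))
  have lapL : ∀ t : ℝ, 0 ≤ t →
      ∫⁻ ω, ENNReal.ofReal (Real.exp (-(t * S ω))) = ENNReal.ofReal (Real.exp (-(t ^ α))) := by
    intro t ht
    rw [← ofReal_integral_eq_lintegral_ofReal (hexp_int t ht)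
      (ae_of_all _ fun ω => (Real.exp_pos _).le), hLaplace t ht]
  have lap1 : ∀ t : ℝ, 0 ≤ t →
      ∫⁻ ω, ENNReal.ofReal (1 - Real.exp (-(t * S ω))) =
        ENNReal.ofReal (1 - Real.exp (-(t ^ α))) := by
    intro t ht
    have hint : Integrable (fun ω => 1 - Real.exp (-(t * S ω))) :=
      (integrable_const 1).sub (hexp_int t ht)
    have hnn : ∀ ω, 0 ≤ 1 - Real.exp (-(t * S ω)) := fun ω => by
      have : Real.exp (-(t * S ω)) ≤ 1 :=
        Real.exp_le_one_iff.mpr (neg_nonpos.mpr (mul_nonneg ht (hSpos ω).le))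
      linarith
    rw [← ofReal_integral_eq_lintegral_ofReal hint (ae_of_all _ hnn),
      integral_sub (integrable_const 1) (hexp_int t ht), hLaplace t ht, integral_const]
    simp
  rcases lt_trichotomy s 0 with hsneg | hszero | hspos
  · -- negative s : positive moments of S
    set p : ℝ := -(β * s) with hp_def
    have hp : 0 < p := by simp only [hp_def]; nlinarith
    have hpα : p < α := by
      have h1 : β * (-(α / β)) < β * s := mul_lt_mul_of_pos_left hs hβ
      have h2 : β * (α / β) = α := by field_simp
      simp only [hp_def]; nlinarith
    have hp1 : p < 1 := hpα.trans hα1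
    have hΓ1p : 0 < Real.Gamma (1 - p) := Real.Gamma_pos_of_pos (by linarith)
    have hpα1 : p / α < 1 := (div_lt_one hα0).mpr hpα
    have hΓ1pα : 0 < Real.Gamma (1 - p / α) := Real.Gamma_pos_of_pos (by linarith)
    have keyneg1 : ∀ c : ℝ, 0 < c →
        ∫⁻ t in Ioi (0:ℝ), ENNReal.ofReal (t ^ (-p - 1) * (1 - Real.exp (-(c * t)))) =
          ENNReal.ofReal (c ^ p * Real.Gamma (1 - p) / p) := by
      intro c hc
      have := rsm_key_neg hp (γ := 1) (by linarith) hc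
      simpa only [Real.rpow_one, div_one] using this
    have keynegα : ∫⁻ t in Ioi (0:ℝ),
        ENNReal.ofReal (t ^ (-p - 1) * (1 - Real.exp (-(t ^ α)))) =
          ENNReal.ofReal (Real.Gamma (1 - p / α) / p) := by
      have := rsm_key_neg hp (γ := α) hpα one_pos
      simpa only [one_mul, Real.one_rpow] using this
    have hmeas : Measurable fun z : Ω × ℝ =>
        ENNReal.ofReal (z.2 ^ (-p - 1) * (1 - Real.exp (-(S z.1 * z.2)))) :=
      (((rsm_measurable_rpow_const _).comp measurable_snd).mul
        (measurable_const.sub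
          (((hSmeas.comp measurable_fst).mul measurable_snd).neg.exp))).ennreal_ofReal
    have keyA : ENNReal.ofReal (Real.Gamma (1 - p) / p) *
        (∫⁻ ω, ENNReal.ofReal (S ω ^ p)) = ENNReal.ofReal (Real.Gamma (1 - p / α) / p) := by
      calc ENNReal.ofReal (Real.Gamma (1 - p) / p) * ∫⁻ ω, ENNReal.ofReal (S ω ^ p)
          = ∫⁻ ω, ENNReal.ofReal (Real.Gamma (1 - p) / p) * ENNReal.ofReal (S ω ^ p) :=
            (lintegral_const_mul _
              (((rsm_measurable_rpow_const _).comp hSmeas).ennreal_ofReal)).symm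
        _ = ∫⁻ ω, ∫⁻ t in Ioi (0:ℝ),
              ENNReal.ofReal (t ^ (-p - 1) * (1 - Real.exp (-(S ω * t)))) := by
            refine lintegral_congr fun ω => ?_
            rw [keyneg1 (S ω) (hSpos ω),
              ← ENNReal.ofReal_mul (div_nonneg hΓ1p.le hp.le)]
            congr 1
            ring
        _ = ∫⁻ t in Ioi (0:ℝ), ∫⁻ ω,
              ENNReal.ofReal (t ^ (-p - 1) * (1 - Real.exp (-(S ω * t)))) :=
            lintegral_lintegral_swap hmeas.aemeasurable
        _ = ∫⁻ t in Ioi (0:ℝ),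
              ENNReal.ofReal (t ^ (-p - 1) * (1 - Real.exp (-(t ^ α)))) := by
            refine setLIntegral_congr_fun measurableSet_Ioi (fun t ht => ?_)
            have ht0 : (0:ℝ) < t := ht
            have hcomm : ∀ ω : Ω, -(S ω * t) = -(t * S ω) := fun ω => by ring
            simp_rw [ENNReal.ofReal_mul (Real.rpow_nonneg ht0.le _), hcomm]
            rw [lintegral_const_mul (f := fun ω => ENNReal.ofReal (1 - Real.exp (-(t * S ω)))) _ (measurable_const.sub
              ((hSmeas.const_mul t).neg.exp)).ennreal_ofReal, lap1 t ht0.le]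
        _ = ENNReal.ofReal (Real.Gamma (1 - p / α) / p) := keynegα
    have hA : (∫⁻ ω, ENNReal.ofReal (S ω ^ p)) =
        ENNReal.ofReal (Real.Gamma (1 - p / α) / Real.Gamma (1 - p)) := by
      have h2 : ENNReal.ofReal (Real.Gamma (1 - p) / p) * (∫⁻ ω, ENNReal.ofReal (S ω ^ p)) =
          ENNReal.ofReal (Real.Gamma (1 - p) / p) *
            ENNReal.ofReal (Real.Gamma (1 - p / α) / Real.Gamma (1 - p)) := by
        rw [keyA, ← ENNReal.ofReal_mul (div_nonneg hΓ1p.le hp.le)]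
        congr 1
        field_simp
      exact (ENNReal.mul_right_inj
        (ENNReal.ofReal_pos.mpr (div_pos hΓ1p hp)).ne' ENNReal.ofReal_ne_top).mp h2
    have hc : 0 ≤ Real.Gamma (1 - p / α) / Real.Gamma (1 - p) := by positivity
    obtain ⟨h1, h2⟩ := rsm_conclude (g := fun ω => S ω ^ p)
      ((rsm_measurable_rpow_const _).comp hSmeas)
      (fun ω => Real.rpow_nonneg (hSpos ω).le _) hc hA
    refine ⟨h1, ?_⟩
    rw [h2]
    have e1 : 1 + s * β / α = 1 - p / α := by rw [hp_def]; ring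
    have e2 : 1 + s * β = 1 - p := by rw [hp_def]; ring
    rw [e1, e2]
  · -- s = 0
    subst hszero
    simp only [mul_zero, neg_zero, Real.rpow_zero, zero_mul, zero_div, add_zero]
    refine ⟨integrable_const 1, ?_⟩
    rw [integral_const]
    simp [Real.Gamma_one]
  · -- positive s : negative moments of S
    set r : ℝ := β * s with hr_def
    have hr : 0 < r := mul_pos hβ hspos
    have hq : (-1:ℝ) < r - 1 := by linarith
    have hΓr : 0 < Real.Gamma r := Real.Gamma_pos_of_pos hr
    have hΓrα : 0 < Real.Gamma (r / α) := Real.Gamma_pos_of_pos (div_pos hr hα0)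
    have hmeas : Measurable fun z : Ω × ℝ =>
        ENNReal.ofReal (z.2 ^ (r - 1) * Real.exp (-(S z.1 * z.2))) :=
      (((rsm_measurable_rpow_const _).comp measurable_snd).mul
        (((hSmeas.comp measurable_fst).mul measurable_snd).neg.exp)).ennreal_ofReal
    have keyA : ENNReal.ofReal (Real.Gamma r) * (∫⁻ ω, ENNReal.ofReal (S ω ^ (-r))) =
        ENNReal.ofReal (1 / α * Real.Gamma (r / α)) := by
      calc ENNReal.ofReal (Real.Gamma r) * ∫⁻ ω, ENNReal.ofReal (S ω ^ (-r))
          = ∫⁻ ω, ENNReal.ofReal (Real.Gamma r) * ENNReal.ofReal (S ω ^ (-r)) :=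
            (lintegral_const_mul _
              (((rsm_measurable_rpow_const _).comp hSmeas).ennreal_ofReal)).symm
        _ = ∫⁻ ω, ∫⁻ t in Ioi (0:ℝ),
              ENNReal.ofReal (t ^ (r - 1) * Real.exp (-(S ω * t))) := by
            refine lintegral_congr fun ω => ?_
            have := rsm_lint_gamma_mul hq (hSpos ω)
            rw [show r - 1 + 1 = r by ring] at this
            rw [this, ENNReal.ofReal_mul (Real.rpow_nonneg (hSpos ω).le _), mul_comm]
        _ = ∫⁻ t in Ioi (0:ℝ), ∫⁻ ω,
              ENNReal.ofReal (t ^ (r - 1) * Real.exp (-(S ω * t))) :=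
            lintegral_lintegral_swap hmeas.aemeasurable
        _ = ∫⁻ t in Ioi (0:ℝ), ENNReal.ofReal (t ^ (r - 1) * Real.exp (-(t ^ α))) := by
            refine setLIntegral_congr_fun measurableSet_Ioi (fun t ht => ?_)
            have ht0 : (0:ℝ) < t := ht
            have hcomm : ∀ ω : Ω, -(S ω * t) = -(t * S ω) := fun ω => by ring
            simp_rw [ENNReal.ofReal_mul (Real.rpow_nonneg ht0.le _), hcomm]
            rw [lintegral_const_mul (f := fun ω => ENNReal.ofReal (Real.exp (-(t * S ω)))) _ (((hSmeas.const_mul t).neg.exp).ennreal_ofReal),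
              lapL t ht0.le]
        _ = ENNReal.ofReal (1 / α * Real.Gamma (r / α)) := by
            have := rsm_lint_gamma hα0 hq
            rw [show r - 1 + 1 = r by ring] at this
            simp_rw [← this]
    have hA : (∫⁻ ω, ENNReal.ofReal (S ω ^ (-r))) =
        ENNReal.ofReal (1 / α * Real.Gamma (r / α) / Real.Gamma r) := by
      have h2 : ENNReal.ofReal (Real.Gamma r) * (∫⁻ ω, ENNReal.ofReal (S ω ^ (-r))) =
          ENNReal.ofReal (Real.Gamma r) *
            ENNReal.ofReal (1 / α * Real.Gamma (r / α) / Real.Gamma r) := by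
        rw [keyA, ← ENNReal.ofReal_mul hΓr.le]
        congr 1
        field_simp
      exact (ENNReal.mul_right_inj (by simp [hΓr]) ENNReal.ofReal_ne_top).mp h2
    have hexp_eq : -(β * s) = -r := by rw [hr_def]
    rw [hexp_eq]
    have hc : 0 ≤ 1 / α * Real.Gamma (r / α) / Real.Gamma r := by positivity
    obtain ⟨h1, h2⟩ := rsm_conclude (g := fun ω => S ω ^ (-r))
      ((rsm_measurable_rpow_const _).comp hSmeas)
      (fun ω => Real.rpow_nonneg (hSpos ω).le _) hc hA
    refine ⟨h1, ?_⟩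
    rw [h2]
    have e1 : 1 + s * β / α = r / α + 1 := by rw [hr_def]; ring
    have e2 : 1 + s * β = r + 1 := by rw [hr_def]; ring
    rw [e1, e2, Real.Gamma_add_one (div_pos hr hα0).ne', Real.Gamma_add_one hr.ne']
    field_simp
end

section
/- Let X_c = tilt_c(S_{α₁,β₁}) be the c-moment-tilted reciprocal stable law with 0 < α₁ < 1 and β₁, c > 0, and let W ∼ Beta(β₁ c, β₂) with β₂ > 0 be independent of X_c. Then Z = X_c · W^{β₁} has moments E[Z^s] = Γ((s+c)β₁/α₁) Γ(β₁ c + β₂) / (Γ((s+c)β₁ + β₂) Γ(cβ₁/α₁)) for all s > 0. -/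
open MeasureTheory ProbabilityTheory

/-- moments of the Beta-stable product `Z = X_c · W^{β₁}`, where
`X_c = tilt_c(S_{α₁,β₁})` and `W ~ Beta(β₁c, β₂)` are independent. -/
theorem beta_stable_product_moments {Ω : Type*} [MeasureSpace Ω]
    [IsProbabilityMeasure (volume : Measure Ω)]
    (α₁ β₁ β₂ c : ℝ) (hα₁0 : 0 < α₁) (hα₁1 : α₁ < 1)
    (hβ₁ : 0 < β₁) (hβ₂ : 0 < β₂) (hc : 0 < c)
    (X W : Ω → ℝ) (hXmeas : Measurable X) (hWmeas : Measurable W)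
    (hXpos : ∀ ω, 0 < X ω) (hWrange : ∀ ω, W ω ∈ Set.Icc (0:ℝ) 1)
    (hindep : IndepFun X W)
    (hXint : ∀ t : ℝ, 0 < t → Integrable (fun ω => X ω ^ t))
    (hXmom : ∀ t : ℝ, 0 < t → ∫ ω, X ω ^ t =
        Real.Gamma (1 + (t + c) * β₁ / α₁) / Real.Gamma (1 + (t + c) * β₁) *
          (Real.Gamma (1 + β₁ * c) / Real.Gamma (1 + c * β₁ / α₁)))
    (hWmom : ∀ t : ℝ, 0 < t → ∫ ω, W ω ^ t =
        Real.Gamma (t + β₁ * c) * Real.Gamma (β₁ * c + β₂) /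
          (Real.Gamma (t + β₁ * c + β₂) * Real.Gamma (β₁ * c)))
    (s : ℝ) (hs : 0 < s) :
    ∫ ω, (X ω * W ω ^ β₁) ^ s =
      Real.Gamma ((s + c) * β₁ / α₁) * Real.Gamma (β₁ * c + β₂) /
        (Real.Gamma ((s + c) * β₁ + β₂) * Real.Gamma (c * β₁ / α₁)) := by
  have hβs : 0 < β₁ * s := mul_pos hβ₁ hs
  have hsplit : ∀ ω, (X ω * W ω ^ β₁) ^ s = X ω ^ s * W ω ^ (β₁ * s) := by
    intro ω
    rw [Real.mul_rpow (hXpos ω).le (Real.rpow_nonneg (hWrange ω).1 β₁),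
      ← Real.rpow_mul (hWrange ω).1]
  have hind2 : IndepFun (fun ω => X ω ^ s) (fun ω => W ω ^ (β₁ * s)) :=
    hindep.comp (measurable_id.pow measurable_const) (measurable_id.pow measurable_const)
  have hmeasX : AEStronglyMeasurable (fun ω => X ω ^ s)
      (volume : Measure Ω) :=
    (hXmeas.pow measurable_const).aestronglyMeasurable
  have hmeasW : AEStronglyMeasurable (fun ω => W ω ^ (β₁ * s))
      (volume : Measure Ω) :=
    (hWmeas.pow measurable_const).aestronglyMeasurable
  have hprod : ∫ ω, (X ω * W ω ^ β₁) ^ s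
      = (∫ ω, X ω ^ s) * ∫ ω, W ω ^ (β₁ * s) := by
    simp only [hsplit]
    exact hind2.integral_fun_mul_eq_mul_integral hmeasX hmeasW
  rw [hprod, hXmom s hs, hWmom (β₁ * s) hβs]
  -- abbreviate Gamma arguments
  have hbb : β₁ * s + β₁ * c = (s + c) * β₁ := by ring
  rw [hbb]
  have ha : 0 < (s + c) * β₁ / α₁ := by positivity
  have hb : 0 < (s + c) * β₁ := by positivity
  have hd : 0 < β₁ * c := by positivity
  have he : 0 < c * β₁ / α₁ := by positivity
  have g1 : Real.Gamma (1 + (s + c) * β₁ / α₁)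
      = ((s + c) * β₁ / α₁) * Real.Gamma ((s + c) * β₁ / α₁) := by
    rw [add_comm, Real.Gamma_add_one ha.ne']
  have g2 : Real.Gamma (1 + (s + c) * β₁)
      = ((s + c) * β₁) * Real.Gamma ((s + c) * β₁) := by
    rw [add_comm, Real.Gamma_add_one hb.ne']
  have g3 : Real.Gamma (1 + β₁ * c) = (β₁ * c) * Real.Gamma (β₁ * c) := by
    rw [add_comm, Real.Gamma_add_one hd.ne']
  have g4 : Real.Gamma (1 + c * β₁ / α₁)
      = (c * β₁ / α₁) * Real.Gamma (c * β₁ / α₁) := by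
    rw [add_comm, Real.Gamma_add_one he.ne']
  rw [g1, g2, g3, g4]
  have pb := Real.Gamma_pos_of_pos hb
  have pd := Real.Gamma_pos_of_pos hd
  have pe := Real.Gamma_pos_of_pos he
  have pbb := Real.Gamma_pos_of_pos (show (0:ℝ) < (s + c) * β₁ + β₂ by positivity)
  field_simp
end

section
/- The number of supertrees of size n (plane trees where onto each node a red or blue plane tree is grafted) equals K_n = ∑_{k=1}^{⌊n/2⌋} (2^k/(n−k)) · binom(2k−2, k−1) · binom(2n−3k−1, n−k−1), i.e., the n-th coefficient of K(z) = C(2zC(z)) where C(z) = (1 − √(1 − 4z))/2. -/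
open Finset PowerSeries

noncomputable section SupertreeAux



/-- Coefficients of the Catalan generating function `C(z)`. -/
def stC : ℕ → ℝ := fun n => if n = 0 then 0 else catalan (n - 1)

/-- `C(z)` as a formal power series over `ℝ`. -/
def stCps : PowerSeries ℝ := PowerSeries.mk stC

/-- Coefficient of `z^m` in `C(z)^k`. -/
def stb (k m : ℕ) : ℝ := PowerSeries.coeff m (stCps ^ k)

lemma stC_zero : stC 0 = 0 := rfl

lemma stC_succ (n : ℕ) : stC (n + 1) = catalan n := by simp [stC]

lemma stC_nonneg (n : ℕ) : 0 ≤ stC n := by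
  cases n with
  | zero => simp [stC]
  | succ n => rw [stC_succ]; positivity

/-- The functional equation `C = X + C²` of formal power series. -/
lemma stCps_eq : stCps = PowerSeries.X + stCps ^ 2 := by
  ext n
  rw [map_add, sq, PowerSeries.coeff_mul, PowerSeries.coeff_X]
  rcases n with _ | _ | n
  · simp [stCps, stC]
  · simp [stCps, stC, Finset.Nat.sum_antidiagonal_eq_sum_range_succ_mk, Finset.sum_range_succ]
  · rw [Finset.Nat.sum_antidiagonal_eq_sum_range_succ_mk]
    simp only [stCps, coeff_mk]
    rw [Finset.sum_range_succ', Finset.sum_range_succ]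
    have h1 : stC (n + 1 + 1 - (n + 1 + 1)) = 0 := by simp [stC]
    rw [h1, stC_zero]
    have h2 : ∀ i ∈ Finset.range (n + 1), stC (i + 1) * stC (n + 2 - (i + 1)) =
        (catalan i : ℝ) * catalan (n - i) := by
      intro i hi
      rw [Finset.mem_range] at hi
      rw [stC_succ]
      have : n + 2 - (i + 1) = (n - i) + 1 := by omega
      rw [this, stC_succ]
    rw [Finset.sum_congr rfl h2]
    have h3 : catalan (n + 1) = ∑ i ∈ Finset.range (n + 1), catalan i * catalan (n - i) := by
      rw [catalan_succ', Finset.Nat.sum_antidiagonal_eq_sum_range_succ_mk]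
    have : stC (n + 1 + 1) = (catalan (n + 1) : ℝ) := stC_succ (n + 1)
    rw [this, h3]
    push_cast
    ring

lemma stb_zero (m : ℕ) : stb 0 m = if m = 0 then 1 else 0 := by
  simp [stb, PowerSeries.coeff_one]

lemma stb_one (m : ℕ) : stb 1 m = stC m := by
  simp [stb, stCps]

lemma stb_succ (k m : ℕ) : stb (k + 1) m = ∑ p ∈ antidiagonal m, stC p.1 * stb k p.2 := by
  rw [stb, pow_succ, mul_comm, PowerSeries.coeff_mul]
  refine Finset.sum_congr rfl fun p _ => ?_
  simp [stCps, stb]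

lemma stb_nonneg (k m : ℕ) : 0 ≤ stb k m := by
  induction k generalizing m with
  | zero => rw [stb_zero]; positivity
  | succ k ih =>
    rw [stb_succ]
    exact Finset.sum_nonneg fun p _ => mul_nonneg (stC_nonneg _) (ih _)

lemma stb_eq_zero {k m : ℕ} (h : m < k) : stb k m = 0 := by
  induction k generalizing m with
  | zero => omega
  | succ k ih =>
    rw [stb_succ]
    refine Finset.sum_eq_zero fun p hp => ?_
    rw [Finset.HasAntidiagonal.mem_antidiagonal] at hp
    rcases Nat.eq_zero_or_pos p.1 with h1 | h1
    · rw [h1, stC_zero, zero_mul]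
    · rw [ih (by omega), mul_zero]

lemma stb_diag (k : ℕ) : stb k k = 1 := by
  induction k with
  | zero => simp [stb_zero]
  | succ k ih =>
    rw [stb_succ]
    rw [Finset.sum_eq_single (1, k)]
    · rw [stC_succ, catalan_zero, ih]; norm_num
    · intro p hp hne
      rw [Finset.HasAntidiagonal.mem_antidiagonal] at hp
      rcases Nat.eq_zero_or_pos p.1 with h1 | h1
      · rw [h1, stC_zero, zero_mul]
      · have : p.1 = 1 ∧ p.2 = k ∨ 2 ≤ p.1 := by
          rcases Nat.lt_or_ge p.1 2 with h2 | h2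
          · left; omega
          · right; exact h2
        rcases this with ⟨ha, hb⟩ | h2
        · exact absurd (Prod.ext ha hb) hne
        · rw [stb_eq_zero (by omega), mul_zero]
    · intro h
      exact absurd (Finset.HasAntidiagonal.mem_antidiagonal.mpr (by omega)) h



/-- The key coefficient recurrence from `C^{k+1} = X·C^k + C^{k+2}`. -/
lemma stb_rec (k m : ℕ) : stb (k + 1) (m + 1) = stb k m + stb (k + 2) (m + 1) := by
  have h : stCps ^ (k + 1) = PowerSeries.X * stCps ^ k + stCps ^ (k + 2) := by
    calc stCps ^ (k + 1) = stCps ^ k * stCps := by ring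
    _ = stCps ^ k * (PowerSeries.X + stCps ^ 2) := by rw [← stCps_eq]
    _ = PowerSeries.X * stCps ^ k + stCps ^ (k + 2) := by ring
  have := congrArg (PowerSeries.coeff (m + 1)) h
  rw [map_add, PowerSeries.coeff_succ_X_mul] at this
  exact this

/-- Catalan number as a difference of two binomial coefficients. -/
lemma catalan_diff (n : ℕ) : (catalan (n + 1) : ℝ) =
    ((2 * n + 2).choose (n + 1) : ℝ) - ((2 * n + 2).choose n : ℝ) := by
  have h1 : (2 * n + 2).choose (n + 1) * (n + 1) = (2 * n + 2).choose n * (n + 2) := by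
    have := Nat.choose_succ_right_eq (2 * n + 2) n
    have h2 : 2 * n + 2 - n = n + 2 := by omega
    rw [h2] at this
    exact this
  have h2 : (n + 2) * catalan (n + 1) = (2 * n + 2).choose (n + 1) := by
    have := succ_mul_catalan_eq_centralBinom (n + 1)
    rwa [Nat.centralBinom, show 2 * (n + 1) = 2 * n + 2 from rfl] at this
  have h1' : ((2 * n + 2).choose (n + 1) : ℝ) * (n + 1) = ((2 * n + 2).choose n : ℝ) * (n + 2) :=
    by exact_mod_cast congrArg (Nat.cast (R := ℝ)) h1
  have h2' : ((n : ℝ) + 2) * (catalan (n + 1) : ℝ) = ((2 * n + 2).choose (n + 1) : ℝ) := by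
    exact_mod_cast congrArg (Nat.cast (R := ℝ)) h2
  have hne : ((n : ℝ) + 2) ≠ 0 := by positivity
  apply mul_left_cancel₀ hne
  rw [h2']
  linear_combination -h1'

/-- Ballot-number formula for the coefficients of `C^k`, `k ≥ 1`, above the diagonal. -/
lemma stb_formula : ∀ k j : ℕ, stb (k + 1) (k + j + 2) =
    ((k + 2 * j + 2).choose (j + 1) : ℝ) - ((k + 2 * j + 2).choose j : ℝ) := by
  intro k
  induction k using Nat.strong_induction_on with
  | _ k ih =>
    match k with
    | 0 =>
      intro j
      rw [stb_one, show 0 + j + 2 = (j + 1) + 1 from by omega, stC_succ, catalan_diff j]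
      norm_num
    | 1 =>
      intro j
      have hrec := stb_rec 0 (j + 2)
      rw [stb_zero] at hrec
      simp only [show ¬(j + 2 = 0) from by omega, if_false, zero_add] at hrec
      rw [show 1 + j + 2 = j + 3 from by omega, ← hrec, stb_one,
        show j + 3 = (j + 2) + 1 from rfl, stC_succ, catalan_diff (j + 1)]
      have hsymm : (2 * j + 3).choose (j + 2) = (2 * j + 3).choose (j + 1) := by
        have := Nat.choose_symm (n := 2 * j + 3) (k := j + 2) (by omega)
        rw [show 2 * j + 3 - (j + 2) = j + 1 from by omega] at this
        omega
      have hp1 : (2 * (j + 1) + 2).choose (j + 1 + 1) =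
          (2 * j + 3).choose (j + 1) + (2 * j + 3).choose (j + 2) := by
        rw [show 2 * (j + 1) + 2 = (2 * j + 3) + 1 from by omega]
        rw [Nat.choose_succ_succ' (2 * j + 3) (j + 1)]
      have hp2 : (2 * (j + 1) + 2).choose (j + 1) =
          (2 * j + 3).choose j + (2 * j + 3).choose (j + 1) := by
        rw [show 2 * (j + 1) + 2 = (2 * j + 3) + 1 from by omega]
        rw [Nat.choose_succ_succ' (2 * j + 3) j]
      rw [hp1, hp2, hsymm]
      push_cast
      ring
    | (k + 2) =>
      intro j
      have hrec := stb_rec (k + 1) (k + j + 3)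
      -- stb (k+2) (k+j+4) = stb (k+1) (k+j+3) + stb (k+3) (k+j+4)
      have e1 : stb (k + 2) (k + j + 4) =
          ((k + 1) + 2 * (j + 1) + 2).choose ((j + 1) + 1) -
          ((k + 1) + 2 * (j + 1) + 2).choose (j + 1) := by
        have := ih (k + 1) (by omega) (j + 1)
        rwa [show (k + 1) + (j + 1) + 2 = k + j + 4 from by omega] at this
      have e2 : stb (k + 1) (k + j + 3) =
          (k + 2 * (j + 1) + 2).choose ((j + 1) + 1) -
          (k + 2 * (j + 1) + 2).choose (j + 1) := by
        have := ih k (by omega) (j + 1)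
        rwa [show k + (j + 1) + 2 = k + j + 3 from by omega] at this
      have hrec' : stb (k + 3) (k + j + 4) = stb (k + 2) (k + j + 4) - stb (k + 1) (k + j + 3) := by
        rw [show k + j + 4 = (k + j + 3) + 1 from rfl] at *
        linarith [stb_rec (k + 1) (k + j + 3)]
      rw [show k + 2 + j + 2 = k + j + 4 from by omega, hrec', e1, e2]
      have hp1 : ((k + 1) + 2 * (j + 1) + 2).choose ((j + 1) + 1) =
          (k + 2 * (j + 1) + 2).choose (j + 1) + (k + 2 * (j + 1) + 2).choose (j + 2) := by
        rw [show (k + 1) + 2 * (j + 1) + 2 = (k + 2 * (j + 1) + 2) + 1 from by omega,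
          Nat.choose_succ_succ' (k + 2 * (j + 1) + 2) (j + 1)]
      have hp2 : ((k + 1) + 2 * (j + 1) + 2).choose (j + 1) =
          (k + 2 * (j + 1) + 2).choose j + (k + 2 * (j + 1) + 2).choose (j + 1) := by
        rw [show (k + 1) + 2 * (j + 1) + 2 = (k + 2 * (j + 1) + 2) + 1 from by omega,
          Nat.choose_succ_succ' (k + 2 * (j + 1) + 2) j]
      rw [hp1, hp2]
      rw [show k + 2 * (j + 1) + 2 = k + 2 + 2 * j + 2 from by omega]
      push_cast
      ring


lemma catalan_real_le (n : ℕ) : (catalan n : ℝ) ≤ 4 ^ n := by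
  have h1 : catalan n ≤ n.centralBinom := by
    have := succ_mul_catalan_eq_centralBinom n
    nlinarith
  have h2 : n.centralBinom ≤ 4 ^ n := by
    have hmem : n ∈ Finset.range (2 * n + 1) := by simp; omega
    have := Finset.single_le_sum (f := fun i => (2 * n).choose i)
      (fun i _ => Nat.zero_le _) hmem
    rw [Nat.sum_range_choose] at this
    calc n.centralBinom = (2 * n).choose n := rfl
    _ ≤ 2 ^ (2 * n) := this
    _ = 4 ^ n := by rw [pow_mul]; norm_num
  exact_mod_cast le_trans h1 h2

lemma stC_le (n : ℕ) : stC n ≤ 4 ^ n := by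
  cases n with
  | zero => rw [stC_zero]; positivity
  | succ n =>
    rw [stC_succ]
    calc (catalan n : ℝ) ≤ 4 ^ n := catalan_real_le n
    _ ≤ 4 ^ (n + 1) := by apply pow_le_pow_right₀ <;> norm_num

lemma abs_term_le {t : ℝ} (ht : |t| ≤ 1 / 8) (n : ℕ) :
    ‖stC n * t ^ n‖ ≤ (1 / 2) ^ n := by
  rw [norm_mul, norm_pow, Real.norm_eq_abs, Real.norm_eq_abs, abs_of_nonneg (stC_nonneg n)]
  calc stC n * |t| ^ n ≤ 4 ^ n * (1 / 8) ^ n :=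
        mul_le_mul (stC_le n) (pow_le_pow_left₀ (abs_nonneg t) ht n)
          (by positivity) (by positivity)
  _ = (1 / 2) ^ n := by rw [← mul_pow]; norm_num

lemma summable_stC {t : ℝ} (ht : |t| ≤ 1 / 8) : Summable (fun n => ‖stC n * t ^ n‖) :=
  Summable.of_nonneg_of_le (fun n => norm_nonneg _) (abs_term_le ht)
    (summable_geometric_of_lt_one (by norm_num) (by norm_num))

/-- The Catalan generating function as a sum. -/
def stF (t : ℝ) : ℝ := ∑' n, stC n * t ^ n

lemma stF_hasSum {t : ℝ} (ht : |t| ≤ 1 / 8) : HasSum (fun n => stC n * t ^ n) (stF t) :=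
  ((summable_stC ht).of_norm).hasSum

lemma stF_abs_le {t : ℝ} (ht : |t| ≤ 1 / 8) : |stF t| ≤ 2 * |t| := by
  have hs := summable_stC ht
  have h1 : |stF t| ≤ ∑' n, ‖stC n * t ^ n‖ := norm_tsum_le_tsum_norm hs
  have h2 : ∑' n, ‖stC n * t ^ n‖ =
      ‖stC 0 * t ^ 0‖ + ∑' n, ‖stC (n + 1) * t ^ (n + 1)‖ := Summable.tsum_eq_zero_add hs
  have h3 : ‖stC 0 * t ^ 0‖ = 0 := by rw [stC_zero]; simp
  have hbound : ∀ n, ‖stC (n + 1) * t ^ (n + 1)‖ ≤ |t| * (1 / 2) ^ n := by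
    intro n
    rw [norm_mul, norm_pow, Real.norm_eq_abs, Real.norm_eq_abs,
      abs_of_nonneg (stC_nonneg _), stC_succ, pow_succ]
    have e1 : (catalan n : ℝ) * (|t| ^ n * |t|) ≤ 4 ^ n * |t| ^ n * |t| := by
      have := mul_le_mul_of_nonneg_right (catalan_real_le n)
        (by positivity : (0:ℝ) ≤ |t| ^ n * |t|)
      linarith [this]
    have e2 : (4:ℝ) ^ n * |t| ^ n = (4 * |t|) ^ n := by rw [mul_pow]
    have e3 : (4 * |t|) ^ n ≤ (1 / 2) ^ n := by
      apply pow_le_pow_left₀ (by positivity)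
      linarith
    calc (catalan n : ℝ) * (|t| ^ n * |t|) ≤ (4 * |t|) ^ n * |t| := by
          rw [← e2]; linarith
    _ ≤ (1 / 2) ^ n * |t| := mul_le_mul_of_nonneg_right e3 (abs_nonneg t)
    _ = |t| * (1 / 2) ^ n := by ring
  have hsum2 : Summable (fun n => ‖stC (n + 1) * t ^ (n + 1)‖) :=
    (summable_nat_add_iff 1).mpr hs
  have hsum3 : Summable (fun n : ℕ => |t| * (1 / 2 : ℝ) ^ n) :=
    (summable_geometric_of_lt_one (by norm_num) (by norm_num)).mul_left _
  have h4 : ∑' n, ‖stC (n + 1) * t ^ (n + 1)‖ ≤ ∑' n : ℕ, |t| * (1 / 2 : ℝ) ^ n :=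
    Summable.tsum_le_tsum hbound hsum2 hsum3
  have h5 : ∑' n : ℕ, |t| * (1 / 2 : ℝ) ^ n = |t| * 2 := by
    rw [tsum_mul_left, tsum_geometric_of_lt_one (by norm_num) (by norm_num)]
    norm_num
  calc |stF t| ≤ ∑' n, ‖stC n * t ^ n‖ := h1
  _ = ‖stC 0 * t ^ 0‖ + ∑' n, ‖stC (n + 1) * t ^ (n + 1)‖ := h2
  _ = ∑' n, ‖stC (n + 1) * t ^ (n + 1)‖ := by rw [h3, zero_add]
  _ ≤ ∑' n : ℕ, |t| * (1 / 2 : ℝ) ^ n := h4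
  _ = |t| * 2 := h5
  _ = 2 * |t| := by ring

/-- Cauchy powers: summability and value of `∑ stb k m t^m = (stF t)^k`. -/
lemma stb_tsum {t : ℝ} (ht : |t| ≤ 1 / 8) (k : ℕ) :
    Summable (fun m => ‖stb k m * t ^ m‖) ∧ (∑' m, stb k m * t ^ m) = stF t ^ k := by
  induction k with
  | zero =>
    have hfun : ∀ m : ℕ, stb 0 m * t ^ m = if m = 0 then (1:ℝ) else 0 := by
      intro m; rw [stb_zero]; by_cases h : m = 0 <;> simp [h]
    have hsum : HasSum (fun m : ℕ => if m = 0 then (1:ℝ) else 0) 1 := hasSum_ite_eq 0 1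
    constructor
    · refine Summable.congr ?_ (fun m => by rw [hfun m])
      have : Summable (fun m : ℕ => ‖if m = 0 then (1:ℝ) else 0‖) := by
        refine Summable.congr (f := fun m : ℕ => if m = 0 then ‖(1:ℝ)‖ else 0) ?_ ?_
        · exact (hasSum_ite_eq 0 ‖(1:ℝ)‖).summable
        · intro m; by_cases h : m = 0 <;> simp [h]
      exact this
    · rw [pow_zero, tsum_congr hfun, hsum.tsum_eq]
  | succ k ih =>
    obtain ⟨hsk, hteq⟩ := ih
    have hf := summable_stC ht
    have key : ∀ n, ∑ kl ∈ antidiagonal n, (stC kl.1 * t ^ kl.1) * (stb k kl.2 * t ^ kl.2)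
        = stb (k + 1) n * t ^ n := by
      intro n
      rw [stb_succ, Finset.sum_mul]
      refine Finset.sum_congr rfl fun p hp => ?_
      rw [Finset.HasAntidiagonal.mem_antidiagonal] at hp
      rw [← hp, pow_add]; ring
    constructor
    · have := summable_norm_sum_mul_antidiagonal_of_summable_norm hf hsk
      refine this.congr fun n => ?_
      rw [key n]
    · have := tsum_mul_tsum_eq_tsum_sum_antidiagonal_of_summable_norm hf hsk
      rw [hteq] at this
      have hl : (∑' n, stC n * t ^ n) = stF t := rfl
      rw [hl] at this
      rw [pow_succ, mul_comm (stF t ^ k) (stF t), this]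
      exact tsum_congr fun n => (key n).symm



lemma stb_two (m : ℕ) : stb 2 m = stC m - (if m = 1 then 1 else 0) := by
  have h : stCps ^ 2 = stCps - PowerSeries.X := by
    conv_rhs => rw [stCps_eq]
    ring
  rw [stb, h, map_sub, PowerSeries.coeff_X]
  simp [stCps]

lemma stF_quad {t : ℝ} (ht : |t| ≤ 1 / 8) : stF t ^ 2 = stF t - t := by
  have h2 := (stb_tsum ht 2).2
  have hfun : ∀ m : ℕ, stb 2 m * t ^ m = stC m * t ^ m - (if m = 1 then t else 0) := by
    intro m
    rw [stb_two]
    by_cases h : m = 1 <;> simp [h] <;> ring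
  have hs1 : Summable (fun m => stC m * t ^ m) := (summable_stC ht).of_norm
  have hs2 : Summable (fun m : ℕ => if m = 1 then t else 0) := (hasSum_ite_eq 1 t).summable
  rw [← h2, tsum_congr hfun, Summable.tsum_sub hs1 hs2, (stF_hasSum ht).tsum_eq, (hasSum_ite_eq 1 t).tsum_eq]

lemma stF_sqrt {t : ℝ} (ht : |t| ≤ 1 / 8) : stF t = (1 - Real.sqrt (1 - 4 * t)) / 2 := by
  have hq := stF_quad ht
  have habs : |stF t| ≤ 1 / 4 := le_trans (stF_abs_le ht) (by linarith [abs_le.mp ht])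
  have hsq : (1 - 2 * stF t) ^ 2 = 1 - 4 * t := by linear_combination 4 * hq
  have hnn : 0 ≤ 1 - 2 * stF t := by
    obtain ⟨hl, hr⟩ := abs_le.mp habs
    linarith
  have : Real.sqrt (1 - 4 * t) = 1 - 2 * stF t := by
    rw [← hsq, Real.sqrt_sq hnn]
  rw [this]
  ring

lemma coeff_eval (n : ℕ) (z : ℝ) :
    ∑ p ∈ antidiagonal n, stC p.1 * 2 ^ p.1 * z ^ p.1 * (stb p.1 p.2 * z ^ p.2) =
    (∑ k ∈ Finset.Icc 1 (n / 2),
          (2 ^ k / ((n : ℝ) - (k : ℝ))) *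
            (Nat.choose (2 * k - 2) (k - 1) : ℝ) *
            (Nat.choose (2 * n - 3 * k - 1) (n - k - 1) : ℝ)) * z ^ n := by
  have step1 : ∀ p ∈ antidiagonal n, stC p.1 * 2 ^ p.1 * z ^ p.1 * (stb p.1 p.2 * z ^ p.2)
      = (stC p.1 * 2 ^ p.1 * stb p.1 p.2) * z ^ n := by
    intro p hp
    rw [Finset.HasAntidiagonal.mem_antidiagonal] at hp
    rw [← hp, pow_add]
    ring
  rw [Finset.sum_congr rfl step1, ← Finset.sum_mul]
  congr 1
  rw [Finset.Nat.sum_antidiagonal_eq_sum_range_succ_mk]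
  have hsub : Finset.Icc 1 (n / 2) ⊆ Finset.range (n + 1) := by
    intro k hk
    rw [Finset.mem_Icc] at hk
    rw [Finset.mem_range]
    omega
  have hzero : ∀ k ∈ Finset.range (n + 1), k ∉ Finset.Icc 1 (n / 2) →
      stC k * 2 ^ k * stb k (n - k) = 0 := by
    intro k hk hnk
    rw [Finset.mem_range] at hk
    rw [Finset.mem_Icc] at hnk
    push_neg at hnk
    rcases Nat.eq_zero_or_pos k with h0 | h0
    · rw [h0, stC_zero]; ring
    · have hgt : n / 2 < k := hnk h0
      rw [stb_eq_zero (by omega)]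
      ring
  rw [← Finset.sum_subset hsub hzero]
  refine Finset.sum_congr rfl fun k hk => ?_
  rw [Finset.mem_Icc] at hk
  obtain ⟨hk1, hk2⟩ := hk
  have h2k : 2 * k ≤ n := by omega
  obtain ⟨K, rfl⟩ : ∃ K, k = K + 1 := ⟨k - 1, by omega⟩
  rw [stC_succ]
  have hcat : ((K : ℝ) + 1) * catalan K = (2 * K).choose K := by
    exact_mod_cast congrArg (Nat.cast (R := ℝ)) (succ_mul_catalan_eq_centralBinom K)
  rw [show 2 * (K + 1) - 2 = 2 * K from by omega, show (K + 1) - 1 = K from by omega]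
  rcases Nat.lt_or_ge (K + 1) (n - (K + 1)) with hlt | hge
  · -- strictly above the diagonal: use the ballot formula
    obtain ⟨j, hj⟩ : ∃ j, n - (K + 1) = K + j + 2 := ⟨n - (K + 1) - (K + 2), by omega⟩
    have hn : n = 2 * K + j + 3 := by omega
    rw [hj, stb_formula K j]
    rw [show 2 * n - 3 * (K + 1) - 1 = K + 2 * j + 2 from by omega,
      show K + j + 2 - 1 = K + j + 1 from by omega]
    have hsym : (K + 2 * j + 2).choose (K + j + 1) = (K + 2 * j + 2).choose (j + 1) := by
      have := Nat.choose_symm (n := K + 2 * j + 2) (k := j + 1) (by omega)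
      rw [show K + 2 * j + 2 - (j + 1) = K + j + 1 from by omega] at this
      omega
    have hratio : ((K + 2 * j + 2).choose (j + 1) : ℝ) * (j + 1) =
        ((K + 2 * j + 2).choose j : ℝ) * (K + j + 2) := by
      have := Nat.choose_succ_right_eq (K + 2 * j + 2) j
      rw [show K + 2 * j + 2 - j = K + j + 2 from by omega] at this
      exact_mod_cast congrArg (Nat.cast (R := ℝ)) this
    rw [hsym, hn]
    have hne : ((2 * K + j + 3 : ℕ) : ℝ) - ((K + 1 : ℕ) : ℝ) = (K : ℝ) + j + 2 := by
      push_cast; ring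
    rw [hne]
    have hKj : ((K : ℝ) + j + 2) ≠ 0 := by positivity
    field_simp
    push_cast
    linear_combination ((catalan K : ℝ)) * hratio +
      (((K + 2 * j + 2).choose (j + 1) : ℝ)) * hcat
  · -- on the diagonal: n = 2K + 2
    have hn : n = 2 * K + 2 := by omega
    have hdiag : n - (K + 1) = K + 1 := by omega
    rw [hdiag, stb_diag]
    rw [show 2 * n - 3 * (K + 1) - 1 = K from by omega,
      show K + 1 - 1 = K from by omega, Nat.choose_self, hn]
    have hne : ((2 * K + 2 : ℕ) : ℝ) - ((K + 1 : ℕ) : ℝ) = (K : ℝ) + 1 := by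
      push_cast; ring
    rw [hne]
    have hK1 : ((K : ℝ) + 1) ≠ 0 := by positivity
    field_simp
    linear_combination hcat



/-- the number of bicoloured supertrees of size `n` equals
`K_n = ∑_{k=1}^{⌊n/2⌋} (2^k/(n−k)) C(2k−2,k−1) C(2n−3k−1,n−k−1)`, i.e. these numbers are
the Taylor coefficients of `K(z) = C(2zC(z))` where `C(z) = (1 − √(1−4z))/2`. -/
theorem supertree_counting :
    ∃ r : ℝ, 0 < r ∧ ∀ z : ℝ, |z| < r →
      HasSum (fun n : ℕ =>
        (∑ k ∈ Finset.Icc 1 (n / 2),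
          (2 ^ k / ((n : ℝ) - (k : ℝ))) *
            (Nat.choose (2 * k - 2) (k - 1) : ℝ) *
            (Nat.choose (2 * n - 3 * k - 1) (n - k - 1) : ℝ)) * z ^ n)
        ((1 - Real.sqrt (1 - 4 * (2 * z * ((1 - Real.sqrt (1 - 4 * z)) / 2)))) / 2) := by
  refine ⟨1 / 8, by norm_num, fun z hz' => ?_⟩
  have hz : |z| ≤ 1 / 8 := le_of_lt hz'
  set t : ℝ := |z| with ht_def
  have ht : |t| ≤ 1 / 8 := by rwa [abs_abs]
  -- the double-indexed family
  set g : ℕ × ℕ → ℝ := fun p => stC p.1 * 2 ^ p.1 * z ^ p.1 * (stb p.1 p.2 * z ^ p.2) with hg_def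
  set gt : ℕ × ℕ → ℝ := fun p => stC p.1 * 2 ^ p.1 * t ^ p.1 * (stb p.1 p.2 * t ^ p.2)
    with hgt_def
  -- w and its bound
  set w : ℝ := 2 * z * stF z with hw_def
  have hFz : |stF z| ≤ 1 / 4 := le_trans (stF_abs_le hz) (by linarith [abs_le.mp hz])
  have hw : |w| ≤ 1 / 8 := by
    rw [hw_def, abs_mul, abs_mul]
    have h8 : |z| ≤ 1 / 8 := hz
    calc |2| * |z| * |stF z| ≤ 2 * (1 / 8) * (1 / 4) := by
          rw [abs_two]
          apply mul_le_mul _ hFz (abs_nonneg _) (by norm_num)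
          apply mul_le_mul_of_nonneg_left h8 (by norm_num)
    _ ≤ 1 / 8 := by norm_num
  have hwt : |2 * t * stF t| ≤ 1 / 8 := by
    have hFt : |stF t| ≤ 1 / 4 := le_trans (stF_abs_le ht) (by linarith [abs_le.mp ht])
    rw [abs_mul, abs_mul, abs_two]
    calc 2 * |t| * |stF t| ≤ 2 * (1 / 8) * (1 / 4) := by
          apply mul_le_mul _ hFt (abs_nonneg _) (by norm_num)
          apply mul_le_mul_of_nonneg_left (by rwa [abs_abs]) (by norm_num)
    _ ≤ 1 / 8 := by norm_num
  -- rows at z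
  have hrow : ∀ k : ℕ, HasSum (fun m => g (k, m)) (stC k * w ^ k) := by
    intro k
    have h1 : HasSum (fun m => stb k m * z ^ m) (stF z ^ k) := by
      have := ((stb_tsum hz k).1.of_norm).hasSum
      rwa [(stb_tsum hz k).2] at this
    have h2 := h1.mul_left (stC k * 2 ^ k * z ^ k)
    convert h2 using 1
    · rfl
    rw [hw_def]
    rw [mul_pow, mul_pow]
    ring
  -- summability of |g| = gt
  have hnorm : ∀ p : ℕ × ℕ, ‖g p‖ = gt p := by
    intro p
    rw [hg_def, hgt_def]
    simp only [norm_mul, norm_pow, Real.norm_eq_abs]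
    rw [abs_of_nonneg (stC_nonneg _), abs_of_nonneg (stb_nonneg _ _), abs_two, ← ht_def]
  have hgt_nonneg : 0 ≤ gt := by
    intro p
    rw [hgt_def]
    have := stC_nonneg p.1
    have := stb_nonneg p.1 p.2
    have : (0:ℝ) ≤ t := abs_nonneg z
    positivity
  have hgt_summable : Summable gt := by
    rw [summable_prod_of_nonneg hgt_nonneg]
    constructor
    · intro k
      have h1 : HasSum (fun m => stb k m * t ^ m) (stF t ^ k) := by
        have := ((stb_tsum ht k).1.of_norm).hasSum
        rwa [(stb_tsum ht k).2] at this
      exact (h1.mul_left (stC k * 2 ^ k * t ^ k)).summable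
    · have hval : ∀ k : ℕ, ∑' m, gt (k, m) = stC k * (2 * t * stF t) ^ k := by
        intro k
        have h1 : HasSum (fun m => stb k m * t ^ m) (stF t ^ k) := by
          have := ((stb_tsum ht k).1.of_norm).hasSum
          rwa [(stb_tsum ht k).2] at this
        rw [(h1.mul_left (stC k * 2 ^ k * t ^ k)).tsum_eq]
        rw [mul_pow, mul_pow]
        ring
      refine Summable.congr ?_ (fun k => (hval k).symm)
      exact (summable_stC hwt).of_norm
  have hg_summable : Summable g := by
    apply Summable.of_norm
    exact hgt_summable.congr fun p => (hnorm p).symm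
  -- total sum equals stF w
  have hS : HasSum g (stF w) := by
    obtain ⟨S, hS⟩ := hg_summable
    have h1 : HasSum (fun k => stC k * w ^ k) S := hS.prod_fiberwise hrow
    have h2 : HasSum (fun k => stC k * w ^ k) (stF w) := stF_hasSum hw
    rwa [h1.unique h2] at hS
  -- regroup along diagonals
  have hsigma : HasSum (fun n => ∑ p ∈ antidiagonal n, g p) (stF w) := by
    have he : HasSum (g ∘ (Finset.HasAntidiagonal.sigmaAntidiagonalEquivProd (A := ℕ))) (stF w) :=
      (Equiv.hasSum_iff _).mpr hS
    refine he.sigma fun n => ?_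
    have := hasSum_fintype (fun p : (antidiagonal n : Finset (ℕ × ℕ)) => g p)
    rwa [Finset.sum_coe_sort] at this
  -- rewrite coefficients and the value
  have hcoeff : (fun n => ∑ p ∈ antidiagonal n, g p) = (fun n : ℕ =>
      (∑ k ∈ Finset.Icc 1 (n / 2),
          (2 ^ k / ((n : ℝ) - (k : ℝ))) *
            (Nat.choose (2 * k - 2) (k - 1) : ℝ) *
            (Nat.choose (2 * n - 3 * k - 1) (n - k - 1) : ℝ)) * z ^ n) :=
    funext fun n => coeff_eval n z
  rw [hcoeff] at hsigma
  have hval : stF w = (1 - Real.sqrt (1 - 4 * (2 * z * ((1 - Real.sqrt (1 - 4 * z)) / 2)))) / 2 := by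
    rw [stF_sqrt hw, hw_def, stF_sqrt hz]
  rwa [hval] at hsigma


end SupertreeAux
end

section
/- The exponential generating function T(z) = 1 − √(1 − z²) satisfies T''(z) = (1 − T(z))^{−3} with T(0) = T'(0) = 0, and its coefficients are [z^{2n}/(2n)!] T(z) = (2n−1)!! · (2n−3)!! for n ≥ 1 (with (−1)!! = 1). -/
open Finset

noncomputable def bitEgfC (n : ℕ) : ℝ := (catalan n : ℝ) / 2 ^ (2 * n + 1)

lemma oddprod (n : ℕ) :
    (∏ k ∈ range n, (2 * (k : ℝ) + 1)) * (2 ^ n * (n.factorial : ℝ))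
      = ((2 * n).factorial : ℝ) := by
  induction n with
  | zero => simp
  | succ n ih =>
      rw [prod_range_succ]
      have h : (2 * (n + 1)).factorial = (2 * n + 2) * ((2 * n + 1) * (2 * n).factorial) := by
        rw [show 2 * (n + 1) = (2 * n + 1) + 1 from by ring, Nat.factorial_succ,
          Nat.factorial_succ]
      rw [h, Nat.factorial_succ]
      push_cast
      linear_combination ((2 * (n : ℝ) + 1) * (2 * (n : ℝ) + 2)) * ih

lemma catalan_cast (n : ℕ) : ((n : ℝ) + 1) * (catalan n : ℝ) = (Nat.centralBinom n : ℝ) := by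
  exact_mod_cast congrArg (Nat.cast (R := ℝ)) (succ_mul_catalan_eq_centralBinom n)
lemma centralBinom_cast (n : ℕ) :
    ((n : ℝ) + 1) * (Nat.centralBinom (n + 1) : ℝ)
      = 2 * (2 * (n : ℝ) + 1) * (Nat.centralBinom n : ℝ) := by
  exact_mod_cast congrArg (Nat.cast (R := ℝ)) (Nat.succ_mul_centralBinom_succ n)
lemma centralBinom_key (N : ℕ) :
    2 * (catalan N : ℝ) = 4 * (Nat.centralBinom N : ℝ) - (Nat.centralBinom (N + 1) : ℝ) := by
  have h1 := catalan_cast N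
  have h2 := centralBinom_cast N
  have hN : ((N : ℝ) + 1) ≠ 0 := by positivity
  refine mul_left_cancel₀ hN ?_
  linear_combination 2 * h1 + h2
lemma bitEgfC_partial (N : ℕ) :
    ∑ n ∈ Finset.range N, bitEgfC n = 1 - (Nat.centralBinom N : ℝ) / 4 ^ N := by
  induction N with
  | zero => simp [Nat.centralBinom]
  | succ N ih =>
      rw [Finset.sum_range_succ, ih]
      unfold bitEgfC
      have h4 : (4 : ℝ) ^ N = 2 ^ (2 * N) := by rw [pow_mul]; norm_num
      have e1 : (2 : ℝ) ^ (2 * N + 1) = 2 ^ (2 * N) * 2 := pow_succ 2 (2 * N)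
      have e2 : (4 : ℝ) ^ (N + 1) = 2 ^ (2 * N) * 4 := by rw [pow_succ, h4]
      rw [e1, e2, h4]
      have hBpos : (0:ℝ) < 2 ^ (2 * N) := by positivity
      have key := centralBinom_key N
      generalize hBB : (2:ℝ) ^ (2 * N) = B at hBpos ⊢
      have hB : B ≠ 0 := ne_of_gt hBpos
      field_simp
      linear_combination 2 * key

lemma coef_eq (n : ℕ) :
    (∏ k ∈ range (n + 1), (2 * (k : ℝ) + 1)) * (∏ k ∈ range n, (2 * (k : ℝ) + 1))
        / (Nat.factorial (2 * (n + 1)) : ℝ) = bitEgfC n := by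
  have h1 : (∏ k ∈ range (n + 1), (2 * (k : ℝ) + 1))
      = ((2 * (n + 1)).factorial : ℝ) / (2 ^ (n + 1) * ((n + 1).factorial : ℝ)) := by
    rw [eq_div_iff (by positivity)]; exact oddprod (n + 1)
  have h0 : (∏ k ∈ range n, (2 * (k : ℝ) + 1))
      = ((2 * n).factorial : ℝ) / (2 ^ n * (n.factorial : ℝ)) := by
    rw [eq_div_iff (by positivity)]; exact oddprod n
  have hcb : (Nat.centralBinom n : ℝ) * ((n.factorial : ℝ) * (n.factorial : ℝ))
      = ((2 * n).factorial : ℝ) := by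
    have := Nat.choose_mul_factorial_mul_factorial (show n ≤ 2 * n by omega)
    rw [show 2 * n - n = n from by omega] at this
    unfold Nat.centralBinom
    rw [← mul_assoc]
    exact_mod_cast congrArg (Nat.cast (R := ℝ)) this
  have hcat : ((n : ℝ) + 1) * (catalan n : ℝ) = (Nat.centralBinom n : ℝ) := by
    exact_mod_cast congrArg (Nat.cast (R := ℝ)) (succ_mul_catalan_eq_centralBinom n)
  have hfs : ((n + 1).factorial : ℝ) = ((n : ℝ) + 1) * (n.factorial : ℝ) := by
    rw [Nat.factorial_succ]; push_cast; ring
  have hf0 : (Nat.factorial (2 * (n + 1)) : ℝ) ≠ 0 := by positivity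
  have hfn : (n.factorial : ℝ) ≠ 0 := by positivity
  have hfn1 : ((n + 1).factorial : ℝ) ≠ 0 := by positivity
  have hkey : (catalan n : ℝ) * (((n : ℝ) + 1) * (n.factorial : ℝ) ^ 2)
      = ((2 * n).factorial : ℝ) := by
    linear_combination ((n.factorial : ℝ)) ^ 2 * hcat + hcb
  rw [h1, h0, bitEgfC]
  rw [hfs]
  field_simp
  linear_combination (-2 * 2 ^ (2 * n) : ℝ) * hkey

lemma bitEgfC_nonneg (n : ℕ) : 0 ≤ bitEgfC n := by unfold bitEgfC; positivity

lemma bitEgfC_partial' (N : ℕ) : ∑ n ∈ range N, bitEgfC n ≤ 1 := by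
  rw [bitEgfC_partial]
  have : (0:ℝ) ≤ (Nat.centralBinom N : ℝ) / 4 ^ N := by positivity
  linarith

lemma bitEgfC_summable : Summable bitEgfC :=
  summable_of_sum_range_le bitEgfC_nonneg bitEgfC_partial'

lemma bitEgfC_tsum_le : ∑' n, bitEgfC n ≤ 1 :=
  Summable.tsum_le_of_sum_range_le bitEgfC_summable bitEgfC_partial'

lemma catalan_conv (n : ℕ) :
    ∑ k ∈ range (n + 1), (catalan k : ℝ) * (catalan (n - k) : ℝ) = (catalan (n + 1) : ℝ) := by
  rw [show (catalan (n+1)) = ∑ ij ∈ Finset.HasAntidiagonal.antidiagonal n, catalan ij.1 * catalan ij.2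
      from catalan_succ' n,
    Finset.Nat.sum_antidiagonal_eq_sum_range_succ (fun x y => catalan x * catalan y)]
  push_cast
  rfl

lemma bitEgfC_conv (n : ℕ) :
    ∑ k ∈ range (n + 1), bitEgfC k * bitEgfC (n - k) = 2 * bitEgfC (n + 1) := by
  have h : ∀ k ∈ range (n + 1), bitEgfC k * bitEgfC (n - k)
      = (catalan k : ℝ) * (catalan (n - k) : ℝ) / 2 ^ (2 * n + 2) := by
    intro k hk
    have hkn : k ≤ n := by simpa using Nat.lt_succ_iff.mp (Finset.mem_range.mp hk)
    unfold bitEgfC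
    rw [div_mul_div_comm, ← pow_add,
      show 2 * k + 1 + (2 * (n - k) + 1) = 2 * n + 2 from by omega]
  rw [Finset.sum_congr rfl h, ← Finset.sum_div, catalan_conv]
  unfold bitEgfC
  rw [show 2 * (n + 1) + 1 = (2 * n + 2) + 1 from by ring, pow_succ]
  ring

lemma bitEgf_hasSum {x : ℝ} (hx0 : 0 ≤ x) (hx1 : x < 1) :
    HasSum (fun n => bitEgfC n * x ^ (n + 1)) (1 - Real.sqrt (1 - x)) := by
  set a : ℕ → ℝ := fun n => bitEgfC n * x ^ (n + 1) with ha
  have han : ∀ n, 0 ≤ a n := fun n => mul_nonneg (bitEgfC_nonneg n) (by positivity)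
  have hale : ∀ n, a n ≤ bitEgfC n * x := by
    intro n
    exact mul_le_mul_of_nonneg_left
      (by calc x ^ (n + 1) ≤ x ^ 1 := pow_le_pow_of_le_one hx0 hx1.le (by omega)
          _ = x := pow_one x) (bitEgfC_nonneg n)
  have hsum_cx : Summable (fun n => bitEgfC n * x) := bitEgfC_summable.mul_right x
  have hsa : Summable a := Summable.of_nonneg_of_le han hale hsum_cx
  set S : ℝ := ∑' n, a n with hS
  have hS0 : 0 ≤ S := tsum_nonneg han
  have hSx : S ≤ x := by
    calc S ≤ ∑' n, bitEgfC n * x := Summable.tsum_le_tsum hale hsa hsum_cx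
      _ = (∑' n, bitEgfC n) * x := by rw [tsum_mul_right]
      _ ≤ 1 * x := mul_le_mul_of_nonneg_right bitEgfC_tsum_le hx0
      _ = x := one_mul x
  have hnorm : Summable fun n => ‖a n‖ := by
    simpa [Real.norm_eq_abs, abs_of_nonneg (han _)] using hsa
  have hcauchy : S * S = ∑' n, ∑ k ∈ range (n + 1), a k * a (n - k) :=
    tsum_mul_tsum_eq_tsum_sum_range_of_summable_norm hnorm hnorm
  have hconv : ∀ n, ∑ k ∈ range (n + 1), a k * a (n - k) = 2 * a (n + 1) := by
    intro n
    have h : ∀ k ∈ range (n + 1), a k * a (n - k)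
        = bitEgfC k * bitEgfC (n - k) * x ^ (n + 2) := by
      intro k hk
      have hkn : k ≤ n := Nat.lt_succ_iff.mp (Finset.mem_range.mp hk)
      simp only [ha]
      calc bitEgfC k * x ^ (k + 1) * (bitEgfC (n - k) * x ^ (n - k + 1))
          = bitEgfC k * bitEgfC (n - k) * (x ^ (k + 1) * x ^ (n - k + 1)) := by ring
        _ = bitEgfC k * bitEgfC (n - k) * x ^ (n + 2) := by
            rw [← pow_add, show (k + 1) + (n - k + 1) = n + 2 from by omega]
    rw [Finset.sum_congr rfl h, ← Finset.sum_mul, bitEgfC_conv]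
    simp only [ha]; ring
  have hsq : S * S = 2 * S - x := by
    rw [hcauchy]
    have h1 : ∑' n, ∑ k ∈ range (n + 1), a k * a (n - k) = ∑' n, 2 * a (n + 1) := by
      exact tsum_congr hconv
    rw [h1, tsum_mul_left]
    have h2 : ∑' n, a (n + 1) = S - a 0 := by
      have := (Summable.tsum_eq_zero_add hsa)
      rw [← hS] at this
      linarith [this]
    rw [h2]
    have ha0 : a 0 = x / 2 := by
      simp [ha, bitEgfC, catalan_zero]
      ring
    rw [ha0]; ring
  have hsqrt : Real.sqrt (1 - x) = 1 - S := by
    have h1 : (1 : ℝ) - x = (1 - S) ^ 2 := by ring_nf; linarith [hsq]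
    rw [h1, Real.sqrt_sq (by linarith)]
  have : 1 - Real.sqrt (1 - x) = S := by rw [hsqrt]; ring
  rw [this, hS]
  exact hsa.hasSum

lemma one_sub_sq_pos {z : ℝ} (hz : |z| < 1) : 0 < 1 - z ^ 2 := by
  have h := abs_lt.mp hz
  nlinarith [h.1, h.2]

lemma T_hasDerivAt {z : ℝ} (hz : |z| < 1) :
    HasDerivAt (fun z : ℝ => 1 - Real.sqrt (1 - z ^ 2)) (z / Real.sqrt (1 - z ^ 2)) z := by
  have h1 : 0 < 1 - z ^ 2 := one_sub_sq_pos hz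
  have hsp : 0 < Real.sqrt (1 - z ^ 2) := Real.sqrt_pos.mpr h1
  have hin : HasDerivAt (fun z : ℝ => 1 - z ^ 2) (-(2 * z)) z := by
    simpa using ((hasDerivAt_pow 2 z).const_sub 1)
  have hs := hin.sqrt (ne_of_gt h1)
  have hT := hs.const_sub 1
  exact hT.congr_deriv (by rw [neg_div, neg_neg, mul_div_mul_left _ _ two_ne_zero])

/-- `T(z) = 1 − √(1−z²)` satisfies `T'' = (1−T)^{−3}`, `T(0) = T'(0) = 0`,
and `[z^{2n}/(2n)!] T(z) = (2n−1)!!·(2n−3)!!` for `n ≥ 1` (with `(−1)!! = 1`),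
where the double factorial is `(2n−1)!! = ∏_{k=0}^{n-1} (2k+1)`. -/
theorem bilabelled_increasing_trees_egf :
    (fun z : ℝ => 1 - Real.sqrt (1 - z ^ 2)) 0 = 0 ∧
    deriv (fun z : ℝ => 1 - Real.sqrt (1 - z ^ 2)) 0 = 0 ∧
    (∀ z : ℝ, |z| < 1 →
      deriv (deriv (fun z : ℝ => 1 - Real.sqrt (1 - z ^ 2))) z =
        ((1 - (1 - Real.sqrt (1 - z ^ 2))) ^ 3)⁻¹) ∧
    (∀ z : ℝ, |z| < 1 →
      HasSum (fun n : ℕ =>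
          (∏ k ∈ Finset.range (n + 1), (2 * (k : ℝ) + 1)) *
            (∏ k ∈ Finset.range n, (2 * (k : ℝ) + 1)) *
            z ^ (2 * (n + 1)) / (Nat.factorial (2 * (n + 1)) : ℝ))
        (1 - Real.sqrt (1 - z ^ 2))) := by
  refine ⟨by simp, ?_, ?_, ?_⟩
  · have h := (T_hasDerivAt (z := 0) (by norm_num)).deriv
    simpa using h
  · intro z hz
    have hball : IsOpen {w : ℝ | |w| < 1} := isOpen_lt (continuous_abs) continuous_const
    have hev : deriv (fun z : ℝ => 1 - Real.sqrt (1 - z ^ 2))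
        =ᶠ[nhds z] fun w => w / Real.sqrt (1 - w ^ 2) := by
      filter_upwards [hball.mem_nhds hz] with w hw
      exact (T_hasDerivAt hw).deriv
    rw [hev.deriv_eq]
    have h1 : 0 < 1 - z ^ 2 := one_sub_sq_pos hz
    have hsp : 0 < Real.sqrt (1 - z ^ 2) := Real.sqrt_pos.mpr h1
    have hsq : Real.sqrt (1 - z ^ 2) ^ 2 = 1 - z ^ 2 := Real.sq_sqrt h1.le
    have hin : HasDerivAt (fun w : ℝ => 1 - w ^ 2) (-(2 * z)) z := by
      simpa using ((hasDerivAt_pow 2 z).const_sub 1)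
    have hs := hin.sqrt (ne_of_gt h1)
    have hdiv : HasDerivAt (fun w : ℝ => w / Real.sqrt (1 - w ^ 2))
        ((1 * Real.sqrt (1 - z ^ 2) - z * (-(2 * z) / (2 * Real.sqrt (1 - z ^ 2))))
          / Real.sqrt (1 - z ^ 2) ^ 2) z :=
      (hasDerivAt_id z).div hs (ne_of_gt hsp)
    rw [hdiv.deriv]
    rw [show (1 - (1 - Real.sqrt (1 - z ^ 2))) = Real.sqrt (1 - z ^ 2) from by ring]
    field_simp
    linear_combination hsq
  · intro z hz
    have hx0 : (0:ℝ) ≤ z ^ 2 := sq_nonneg z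
    have hx1 : z ^ 2 < 1 := by
      have h := abs_lt.mp hz
      nlinarith [h.1, h.2]
    have hmain := bitEgf_hasSum hx0 hx1
    have hfun : (fun n : ℕ =>
        (∏ k ∈ Finset.range (n + 1), (2 * (k : ℝ) + 1)) *
          (∏ k ∈ Finset.range n, (2 * (k : ℝ) + 1)) *
          z ^ (2 * (n + 1)) / (Nat.factorial (2 * (n + 1)) : ℝ))
        = fun n => bitEgfC n * (z ^ 2) ^ (n + 1) := by
      funext n
      rw [← coef_eq n, pow_mul]
      ring
    rw [hfun]
    rw [show (1 : ℝ) - z ^ 2 = 1 - (z^2) from rfl] at hmain ⊢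
    exact hmain
end

section
/- The moment sequence μ_s = Γ(s − λ_G) Γ(−λ_G λ_H − λ̄_M) / (Γ(−λ_G) Γ(sλ_H − λ_G λ_H − λ̄_M)), where λ_G < 0, 0 < λ_H < 1, and λ̄_M ≤ 0, satisfies Carleman's condition ∑_{s≥1} μ_s^{−1/(2s)} = ∞; in particular there is at most one probability distribution on [0,∞) with these moments. -/
open MeasureTheory

section Aux

open Real Filter Topology
open scoped BoundedContinuousFunction ENNReal NNReal

lemma gamma_interp {x h : ℝ} (hx : 0 < x) (h0 : 0 < h) (h1 : h < 1) :
    x * Real.Gamma x ≤ Real.Gamma (x + h) * (x + h) ^ (1 - h) := by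
  have hxh : 0 < x + h := by linarith
  have hxh1 : 0 < x + h + 1 := by linarith
  have key := Real.convexOn_log_Gamma.2 (Set.mem_Ioi.2 hxh) (Set.mem_Ioi.2 hxh1)
    (le_of_lt h0) (by linarith : (0:ℝ) ≤ 1 - h) (by ring)
  simp only [smul_eq_mul, Function.comp_apply] at key
  have hcomb : h * (x + h) + (1 - h) * (x + h + 1) = x + 1 := by ring
  rw [hcomb] at key
  have hΓ1 : Real.Gamma (x + h + 1) = (x + h) * Real.Gamma (x + h) :=
    Real.Gamma_add_one (ne_of_gt hxh)
  rw [hΓ1, Real.log_mul (ne_of_gt hxh) (ne_of_gt (Real.Gamma_pos_of_pos hxh))] at key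
  have key2 : Real.log (Real.Gamma (x + 1)) ≤
      Real.log (Real.Gamma (x + h)) + (1 - h) * Real.log (x + h) := by linarith
  have hΓx1 : Real.Gamma (x + 1) = x * Real.Gamma x := Real.Gamma_add_one (ne_of_gt hx)
  have hpos1 : 0 < Real.Gamma (x + 1) := Real.Gamma_pos_of_pos (by linarith)
  calc x * Real.Gamma x = Real.Gamma (x + 1) := hΓx1.symm
    _ = Real.exp (Real.log (Real.Gamma (x + 1))) := (Real.exp_log hpos1).symm
    _ ≤ Real.exp (Real.log (Real.Gamma (x + h)) + (1 - h) * Real.log (x + h)) :=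
        Real.exp_le_exp.2 key2
    _ = Real.Gamma (x + h) * (x + h) ^ (1 - h) := by
        rw [Real.exp_add, Real.exp_log (Real.Gamma_pos_of_pos hxh),
          Real.rpow_def_of_pos hxh, mul_comm (Real.log (x+h))]

set_option maxHeartbeats 1000000 in
lemma summable_series (lG lH lM : ℝ) (hG : lG < 0) (hH0 : 0 < lH) (hH1 : lH < 1) (hM : lM ≤ 0)
    (m : ℕ → ℝ)
    (hm : ∀ s : ℕ, m s =
      Real.Gamma ((s : ℝ) - lG) * Real.Gamma (-(lG * lH) - lM) /
        (Real.Gamma (-lG) * Real.Gamma ((s : ℝ) * lH - lG * lH - lM)))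
    (t : ℝ) (ht : 0 ≤ t) :
    Summable (fun s : ℕ => t ^ s * m s / (s.factorial : ℝ)) := by
  set b : ℝ := -(lG * lH) - lM with hb_def
  have hb : 0 < b := by
    have : 0 < -(lG * lH) := by nlinarith
    simp only [hb_def]; linarith
  have hm' : ∀ s : ℕ, m s = Real.Gamma ((s : ℝ) - lG) * Real.Gamma b /
      (Real.Gamma (-lG) * Real.Gamma ((s : ℝ) * lH + b)) := by
    intro s
    have h1 : (s : ℝ) * lH - lG * lH - lM = (s : ℝ) * lH + b := by rw [hb_def]; ring
    rw [hm s, h1]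
  have hypos : ∀ s : ℕ, (0:ℝ) < (s : ℝ) * lH + b := by
    intro s
    have : (0:ℝ) ≤ (s:ℝ) * lH := by positivity
    linarith
  have hmpos : ∀ s : ℕ, 0 < m s := by
    intro s
    rw [hm' s]
    have h1 : (0:ℝ) < (s:ℝ) - lG := by
      have : (0:ℝ) ≤ (s:ℝ) := Nat.cast_nonneg s
      linarith
    exact div_pos (mul_pos (Real.Gamma_pos_of_pos h1) (Real.Gamma_pos_of_pos hb))
      (mul_pos (Real.Gamma_pos_of_pos (by linarith)) (Real.Gamma_pos_of_pos (hypos s)))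
  -- recurrence
  have hrec : ∀ s : ℕ, m (s + 1) = m s * (((s:ℝ) - lG) *
      (Real.Gamma ((s:ℝ) * lH + b) / Real.Gamma ((s:ℝ) * lH + b + lH))) := by
    intro s
    have h1 : ((s+1 : ℕ) : ℝ) - lG = ((s:ℝ) - lG) + 1 := by push_cast; ring
    have h2 : ((s+1 : ℕ) : ℝ) * lH + b = (s:ℝ) * lH + b + lH := by push_cast; ring
    have hsG : (0:ℝ) < (s:ℝ) - lG := by
      have : (0:ℝ) ≤ (s:ℝ) := Nat.cast_nonneg s
      linarith
    rw [hm' (s+1), hm' s, h1, h2, Real.Gamma_add_one (ne_of_gt hsG)]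
    have g1 := ne_of_gt (Real.Gamma_pos_of_pos hsG)
    have g2 := ne_of_gt (Real.Gamma_pos_of_pos hb)
    have g3 := ne_of_gt (Real.Gamma_pos_of_pos (show (0:ℝ) < -lG by linarith))
    have g4 := ne_of_gt (Real.Gamma_pos_of_pos (hypos s))
    have g5 : Real.Gamma ((s:ℝ) * lH + b + lH) ≠ 0 :=
      ne_of_gt (Real.Gamma_pos_of_pos (by have := hypos s; linarith))
    field_simp
  -- eventual ratio bound
  set D : ℝ := 2 * t * (1 - lG) + 1 with hD_def
  have hD : 0 < D := by nlinarith
  have htend : Tendsto (fun s : ℕ => ((s:ℝ) * lH + b + lH) ^ (-lH)) atTop (𝓝 0) := by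
    apply (tendsto_rpow_neg_atTop hH0).comp
    apply tendsto_atTop_add_const_right
    apply tendsto_atTop_add_const_right
    exact Tendsto.atTop_mul_const hH0 tendsto_natCast_atTop_atTop
  have hev : ∀ᶠ s : ℕ in atTop, ((s:ℝ) * lH + b + lH) ^ (-lH) ≤ 1 / (2 * D) := by
    have : (0:ℝ) < 1 / (2 * D) := by positivity
    filter_upwards [htend.eventually (gt_mem_nhds this)] with s hs using le_of_lt hs
  apply summable_of_ratio_norm_eventually_le (show (1:ℝ)/2 < 1 by norm_num)
  filter_upwards [hev, eventually_ge_atTop 1] with s hs hs1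
  have hy := hypos s
  set y : ℝ := (s:ℝ) * lH + b with hy_def
  have hylH : lH ≤ y := by
    have h1 : (1:ℝ) ≤ (s:ℝ) := by exact_mod_cast hs1
    have : lH * 1 ≤ (s:ℝ) * lH := by nlinarith
    simp only [hy_def]; nlinarith
  -- Gamma ratio bound
  have hGr : Real.Gamma y / Real.Gamma (y + lH) ≤ (y + lH) ^ (1 - lH) / y := by
    have := gamma_interp hy hH0 hH1
    have hGpos : 0 < Real.Gamma (y + lH) := Real.Gamma_pos_of_pos (by linarith)
    rw [div_le_div_iff₀ hGpos hy]
    nlinarith [Real.Gamma_pos_of_pos hy]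
  -- rpow split
  have hsplit : (y + lH) ^ (1 - lH) = (y + lH) * (y + lH) ^ (-lH) := by
    rw [show (1:ℝ) - lH = 1 + (-lH) by ring, Real.rpow_add (by linarith), Real.rpow_one]
  have hrpow_pos : (0:ℝ) ≤ (y + lH) ^ (-lH) := Real.rpow_nonneg (by linarith) _
  -- key scalar inequality : t * ((s-lG) * ((y+lH)^(1-lH) / y)) ≤ (s+1)/2
  have hkey : t * (((s:ℝ) - lG) * ((y + lH) ^ (1 - lH) / y)) ≤ ((s:ℝ) + 1) / 2 := by
    have h2y : y + lH ≤ 2 * y := by linarith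
    have hslG : (s:ℝ) - lG ≤ (1 - lG) * ((s:ℝ) + 1) := by nlinarith [Nat.cast_nonneg (α := ℝ) s]
    have hb1 : (y + lH) ^ (-lH) ≤ 1 / (2 * D) := hs
    calc t * (((s:ℝ) - lG) * ((y + lH) ^ (1 - lH) / y))
        = t * ((s:ℝ) - lG) * ((y + lH) / y) * ((y + lH) ^ (-lH)) := by
          rw [hsplit]; field_simp
      _ ≤ t * ((1 - lG) * ((s:ℝ) + 1)) * 2 * (1 / (2 * D)) := by
          have h0 : (0:ℝ) ≤ t * ((s:ℝ) - lG) := by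
            have : (0:ℝ) ≤ (s:ℝ) := Nat.cast_nonneg s
            have : (0:ℝ) ≤ (s:ℝ) - lG := by linarith
            positivity
          have hyy : (y + lH) / y ≤ 2 := by
            rw [div_le_iff₀ hy]; linarith
          have h1 : t * ((s:ℝ) - lG) * ((y + lH) / y) ≤ t * ((1 - lG) * ((s:ℝ) + 1)) * 2 := by
            have hA : t * ((s:ℝ) - lG) ≤ t * ((1 - lG) * ((s:ℝ) + 1)) :=
              mul_le_mul_of_nonneg_left hslG ht
            have hB : (0:ℝ) ≤ (y + lH)/y := by positivity
            nlinarith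
          have h2 : (0:ℝ) ≤ t * ((1 - lG) * ((s:ℝ) + 1)) * 2 := by
            have : (0:ℝ) ≤ (s:ℝ) := Nat.cast_nonneg s
            nlinarith
          calc t * ((s:ℝ) - lG) * ((y + lH) / y) * ((y + lH) ^ (-lH))
              ≤ t * ((1 - lG) * ((s:ℝ) + 1)) * 2 * ((y + lH) ^ (-lH)) :=
                mul_le_mul_of_nonneg_right h1 hrpow_pos
            _ ≤ t * ((1 - lG) * ((s:ℝ) + 1)) * 2 * (1 / (2 * D)) :=
                mul_le_mul_of_nonneg_left hb1 h2
      _ ≤ ((s:ℝ) + 1) / 2 := by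
          have hsp : (0:ℝ) ≤ (s:ℝ) + 1 := by positivity
          have hcore : t * (1 - lG) * 2 / (2 * D) ≤ 1 / 2 := by
            rw [div_le_div_iff₀ (by positivity) (by norm_num)]
            simp only [hD_def]; nlinarith
          calc t * ((1 - lG) * ((s:ℝ) + 1)) * 2 * (1 / (2 * D))
              = (t * (1 - lG) * 2 / (2 * D)) * ((s:ℝ) + 1) := by ring
            _ ≤ (1/2) * ((s:ℝ) + 1) := mul_le_mul_of_nonneg_right hcore hsp
            _ = ((s:ℝ) + 1) / 2 := by ring
  -- assemble
  have humpos : ∀ k : ℕ, 0 ≤ t ^ k * m k / (k.factorial : ℝ) := by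
    intro k
    exact div_nonneg (mul_nonneg (pow_nonneg ht k) (hmpos k).le) (Nat.cast_nonneg _)
  rw [Real.norm_eq_abs, Real.norm_eq_abs, abs_of_nonneg (humpos _), abs_of_nonneg (humpos _)]
  have hfac : ((s+1).factorial : ℝ) = ((s:ℝ) + 1) * (s.factorial : ℝ) := by
    rw [Nat.factorial_succ]; push_cast; ring
  rw [hrec s, hfac, pow_succ]
  have hGy : 0 < Real.Gamma y := Real.Gamma_pos_of_pos hy
  have hGylH : 0 < Real.Gamma (y + lH) := Real.Gamma_pos_of_pos (by linarith)
  have hmain : t * (((s:ℝ) - lG) * (Real.Gamma y / Real.Gamma (y + lH))) ≤ ((s:ℝ) + 1) / 2 := by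
    refine le_trans ?_ hkey
    have hslG : (0:ℝ) ≤ (s:ℝ) - lG := by
      have : (0:ℝ) ≤ (s:ℝ) := Nat.cast_nonneg s
      linarith
    have := mul_le_mul_of_nonneg_left hGr hslG
    exact mul_le_mul_of_nonneg_left this ht
  -- final algebra
  have hfpos : (0:ℝ) < (s.factorial : ℝ) := by positivity
  have htm : 0 ≤ t ^ s * m s := mul_nonneg (pow_nonneg ht s) (hmpos s).le
  calc t ^ s * t * (m s * (((s:ℝ) - lG) * (Real.Gamma y / Real.Gamma (y + lH)))) /
        (((s:ℝ) + 1) * (s.factorial : ℝ))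
      = (t ^ s * m s / (s.factorial : ℝ)) *
          (t * (((s:ℝ) - lG) * (Real.Gamma y / Real.Gamma (y + lH))) / ((s:ℝ) + 1)) := by
        field_simp
    _ ≤ (t ^ s * m s / (s.factorial : ℝ)) * (1 / 2) := by
        apply mul_le_mul_of_nonneg_left _ (humpos s)
        rw [div_le_div_iff₀ (by positivity) (by norm_num)]
        nlinarith
    _ = 1 / 2 * (t ^ s * m s / (s.factorial : ℝ)) := by ring

lemma integral_exp_eq_tsum (μ : Measure ℝ) [IsProbabilityMeasure μ]
    (hnull : μ (Set.Iio 0) = 0)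
    (hint : ∀ s : ℕ, Integrable (fun x => x ^ s) μ)
    (m : ℕ → ℝ) (hmom : ∀ s : ℕ, ∫ x, x ^ s ∂μ = m s)
    (hmnn : ∀ s : ℕ, 0 ≤ m s)
    (t : ℝ)
    (hsummable : Summable (fun s : ℕ => |t| ^ s * m s / (s.factorial : ℝ))) :
    ∫ x, Real.exp (t * x) ∂μ = ∑' s : ℕ, t ^ s * m s / (s.factorial : ℝ) := by
  have haex : ∀ᵐ x ∂μ, 0 ≤ x := by
    have hset : {x : ℝ | ¬ 0 ≤ x} = Set.Iio 0 := by ext x; simp [not_le]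
    rw [ae_iff, hset]; exact hnull
  set f : ℕ → ℝ → ℝ := fun s x => t ^ s * x ^ s / (s.factorial : ℝ) with hf_def
  have hfint : ∀ s, Integrable (f s) μ := by
    intro s
    exact ((hint s).const_mul (t ^ s)).div_const _
  have hInorm : ∀ s : ℕ, ∫ x, ‖f s x‖ ∂μ = |t| ^ s * m s / (s.factorial : ℝ) := by
    intro s
    have hcong : ∀ᵐ x ∂μ, ‖f s x‖ = |t| ^ s * x ^ s / (s.factorial : ℝ) := by
      filter_upwards [haex] with x hx
      simp only [hf_def, Real.norm_eq_abs, abs_div, abs_mul, abs_pow,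
        abs_of_nonneg hx, Nat.abs_cast]
    rw [integral_congr_ae hcong]
    rw [show (fun x => |t| ^ s * x ^ s / (s.factorial : ℝ)) =
      (fun x => (|t| ^ s / (s.factorial : ℝ)) * x ^ s) by funext x; ring]
    rw [integral_const_mul, hmom s]
    ring
  have hmeas : ∀ s, AEStronglyMeasurable (f s) μ := fun s => (hfint s).aestronglyMeasurable
  have hlint : ∑' s : ℕ, ∫⁻ x, ‖f s x‖ₑ ∂μ ≠ ⊤ := by
    have heq : ∀ s : ℕ, ∫⁻ x, ‖f s x‖ₑ ∂μ =
        ENNReal.ofReal (|t| ^ s * m s / (s.factorial : ℝ)) := by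
      intro s
      rw [← MeasureTheory.ofReal_integral_norm_eq_lintegral_enorm (hfint s), hInorm s]
    simp_rw [heq]
    rw [← ENNReal.ofReal_tsum_of_nonneg (fun s => div_nonneg (mul_nonneg (pow_nonneg (abs_nonneg t) s) (hmnn s)) (Nat.cast_nonneg _)) hsummable]
    exact ENNReal.ofReal_ne_top
  have key := MeasureTheory.integral_tsum hmeas hlint
  have hptw : ∀ x : ℝ, ∑' s : ℕ, f s x = Real.exp (t * x) := by
    intro x
    rw [Real.exp_eq_exp_ℝ, NormedSpace.exp_eq_tsum_div]
    congr 1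
    funext s
    simp only [hf_def, mul_pow]
  have hI : ∀ s : ℕ, ∫ x, f s x ∂μ = t ^ s * m s / (s.factorial : ℝ) := by
    intro s
    simp only [hf_def]
    rw [show (fun x => t ^ s * x ^ s / (s.factorial : ℝ)) =
      (fun x => (t ^ s / (s.factorial : ℝ)) * x ^ s) by funext x; ring]
    rw [integral_const_mul, hmom s]
    ring
  calc ∫ x, Real.exp (t * x) ∂μ = ∫ x, ∑' s, f s x ∂μ := by
        congr 1; funext x; rw [hptw x]
    _ = ∑' s, ∫ x, f s x ∂μ := key
    _ = ∑' s : ℕ, t ^ s * m s / (s.factorial : ℝ) := by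
        congr 1; funext s; exact hI s

lemma not_summable_carleman (lG lH lM : ℝ) (hG : lG < 0) (hH0 : 0 < lH) (hH1 : lH < 1)
    (hM : lM ≤ 0) (m : ℕ → ℝ)
    (hm : ∀ s : ℕ, m s =
      Real.Gamma ((s : ℝ) - lG) * Real.Gamma (-(lG * lH) - lM) /
        (Real.Gamma (-lG) * Real.Gamma ((s : ℝ) * lH - lG * lH - lM))) :
    ¬ Summable (fun s : ℕ => m (s + 1) ^ (-(1 : ℝ) / (2 * ((s : ℝ) + 1)))) := by
  set b : ℝ := -(lG * lH) - lM with hb_def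
  have hb : 0 < b := by
    have : 0 < -(lG * lH) := by nlinarith
    simp only [hb_def]; linarith
  have hGneg : (0:ℝ) < -lG := by linarith
  set A : ℝ := Real.Gamma b / Real.Gamma (-lG) with hA_def
  have hA : 0 < A := div_pos (Real.Gamma_pos_of_pos hb) (Real.Gamma_pos_of_pos hGneg)
  set M : ℝ := max A 1 with hM_def
  have hM1 : (1:ℝ) ≤ M := le_max_right _ _
  have hMpos : (0:ℝ) < M := lt_of_lt_of_le one_pos hM1
  set k : ℕ := ⌈-lG⌉₊ with hk_def
  have hkG : -lG ≤ (k:ℝ) := Nat.le_ceil _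
  have hypos : ∀ s : ℕ, (0:ℝ) < (s : ℝ) * lH + b := by
    intro s
    have : (0:ℝ) ≤ (s:ℝ) * lH := by positivity
    linarith
  have hm' : ∀ s : ℕ, m s = Real.Gamma ((s : ℝ) - lG) * Real.Gamma b /
      (Real.Gamma (-lG) * Real.Gamma ((s : ℝ) * lH + b)) := by
    intro s
    have h1 : (s : ℝ) * lH - lG * lH - lM = (s : ℝ) * lH + b := by rw [hb_def]; ring
    rw [hm s, h1]
  have hmpos : ∀ s : ℕ, 0 < m s := by
    intro s
    rw [hm' s]
    have h1 : (0:ℝ) < (s:ℝ) - lG := by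
      have : (0:ℝ) ≤ (s:ℝ) := Nat.cast_nonneg s
      linarith
    exact div_pos (mul_pos (Real.Gamma_pos_of_pos h1) (Real.Gamma_pos_of_pos hb))
      (mul_pos (Real.Gamma_pos_of_pos hGneg) (Real.Gamma_pos_of_pos (hypos s)))
  -- choose s0 large
  obtain ⟨s1, hs1⟩ : ∃ s1 : ℕ, (2:ℝ) ≤ (s1:ℝ) * lH := by
    obtain ⟨n, hn⟩ := exists_nat_gt (2 / lH)
    exact ⟨n, by rw [← div_le_iff₀ hH0]; exact hn.le⟩
  set s0 : ℕ := max (max s1 k) 2 with hs0_def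
  -- the main upper bound on m s for s ≥ s0
  have hkey : ∀ s : ℕ, s0 ≤ s → (M * ((s:ℝ) + k))⁻¹ ≤ m s ^ (-(1:ℝ) / (2 * (s:ℝ))) := by
    intro s hs
    have hs2 : 2 ≤ s := le_trans (le_max_right _ _) hs
    have hsk : k ≤ s := le_trans (le_trans (le_max_right _ _) (le_max_left _ _)) hs
    have hss1 : s1 ≤ s := le_trans (le_trans (le_max_left _ _) (le_max_left _ _)) hs
    have hs2R : (2:ℝ) ≤ (s:ℝ) := by exact_mod_cast hs2
    have hspos : (0:ℝ) < (s:ℝ) := by linarith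
    -- Gamma (s lH + b) ≥ 1
    have hG1 : (1:ℝ) ≤ Real.Gamma ((s:ℝ) * lH + b) := by
      have h2le : (2:ℝ) ≤ (s:ℝ) * lH + b := by
        have : (s1:ℝ) * lH ≤ (s:ℝ) * lH := by
          have : (s1:ℝ) ≤ (s:ℝ) := by exact_mod_cast hss1
          nlinarith
        linarith [hs1]
      have := Real.Gamma_strictMonoOn_Ici.monotoneOn (Set.mem_Ici.2 (le_refl (2:ℝ)))
        (Set.mem_Ici.2 h2le) h2le
      rwa [Real.Gamma_two] at this
    -- Gamma (s - lG) ≤ (s+k-1)!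
    have hGle : Real.Gamma ((s:ℝ) - lG) ≤ ((s + k - 1).factorial : ℝ) := by
      have hcast : ((s + k - 1 : ℕ) : ℝ) + 1 = (s:ℝ) + (k:ℝ) := by
        have hk1 : 1 ≤ s + k := by omega
        push_cast [Nat.cast_sub (by omega : 1 ≤ s + k)]
        ring
      have hmono : Real.Gamma ((s:ℝ) - lG) ≤ Real.Gamma ((s:ℝ) + (k:ℝ)) := by
        rcases eq_or_lt_of_le (show (s:ℝ) - lG ≤ (s:ℝ) + (k:ℝ) by linarith) with h | h
        · rw [h]
        · exact le_of_lt (Real.Gamma_strictMonoOn_Ici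
            (Set.mem_Ici.2 (by linarith)) (Set.mem_Ici.2 (by linarith)) h)
      calc Real.Gamma ((s:ℝ) - lG) ≤ Real.Gamma ((s:ℝ) + (k:ℝ)) := hmono
        _ = ((s + k - 1).factorial : ℝ) := by
            rw [← hcast, Real.Gamma_nat_eq_factorial]
    -- m s ≤ A * (s+k)^(s+k)
    have hmsle : m s ≤ A * ((s:ℝ) + k) ^ (s + k : ℕ) := by
      have h1 : m s ≤ A * Real.Gamma ((s:ℝ) - lG) := by
        rw [hm' s, hA_def]
        rw [div_le_iff₀ (by positivity : (0:ℝ) < Real.Gamma (-lG) * Real.Gamma ((s:ℝ)*lH + b))]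
        have hGpos : 0 < Real.Gamma ((s:ℝ) - lG) := Real.Gamma_pos_of_pos (by linarith)
        have hGb : 0 < Real.Gamma b := Real.Gamma_pos_of_pos hb
        have hGn : 0 < Real.Gamma (-lG) := Real.Gamma_pos_of_pos hGneg
        have expand : Real.Gamma b / Real.Gamma (-lG) * Real.Gamma ((s:ℝ) - lG) *
            (Real.Gamma (-lG) * Real.Gamma ((s:ℝ)*lH + b)) =
            Real.Gamma ((s:ℝ) - lG) * Real.Gamma b * Real.Gamma ((s:ℝ)*lH + b) := by
          field_simp
        rw [expand]
        nlinarith [mul_pos hGpos hGb]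
        
      have h2 : ((s + k - 1).factorial : ℝ) ≤ ((s:ℝ) + k) ^ (s + k : ℕ) := by
        calc ((s + k - 1).factorial : ℝ) ≤ ((s+k).factorial : ℝ) := by
              exact_mod_cast Nat.factorial_le (by omega)
          _ ≤ (((s+k) ^ (s+k) : ℕ) : ℝ) := by exact_mod_cast Nat.factorial_le_pow _
          _ = ((s:ℝ) + k) ^ (s + k : ℕ) := by push_cast; ring
      calc m s ≤ A * Real.Gamma ((s:ℝ) - lG) := h1
        _ ≤ A * ((s + k - 1).factorial : ℝ) := by nlinarith [hGle, hA]
        _ ≤ A * ((s:ℝ) + k) ^ (s + k : ℕ) := by nlinarith [h2, hA]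
    -- rpow bound
    have hskpos : (1:ℝ) ≤ (s:ℝ) + k := by
      have : (0:ℝ) ≤ (k:ℝ) := Nat.cast_nonneg k
      linarith
    have hepos : (0:ℝ) < 1 / (2 * (s:ℝ)) := by positivity
    have hrle : m s ^ ((1:ℝ) / (2 * (s:ℝ))) ≤ M * ((s:ℝ) + k) := by
      have step1 : m s ^ ((1:ℝ) / (2 * (s:ℝ))) ≤
          (A * ((s:ℝ) + k) ^ (s + k : ℕ)) ^ ((1:ℝ) / (2 * (s:ℝ))) :=
        Real.rpow_le_rpow (hmpos s).le hmsle hepos.le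
      have step2 : (A * ((s:ℝ) + k) ^ (s + k : ℕ)) ^ ((1:ℝ) / (2 * (s:ℝ))) =
          A ^ ((1:ℝ) / (2 * (s:ℝ))) *
            (((s:ℝ) + k) ^ (s + k : ℕ)) ^ ((1:ℝ) / (2 * (s:ℝ))) :=
        Real.mul_rpow hA.le (by positivity)
      have step3 : A ^ ((1:ℝ) / (2 * (s:ℝ))) ≤ M := by
        rcases le_total A 1 with h | h
        · exact le_trans (Real.rpow_le_one hA.le h hepos.le) hM1
        · have h1 : (1:ℝ) / (2 * (s:ℝ)) ≤ 1 := by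
            rw [div_le_one (by positivity)]; linarith
          have h2 : A ^ ((1:ℝ) / (2 * (s:ℝ))) ≤ A ^ (1:ℝ) :=
            Real.rpow_le_rpow_of_exponent_le h h1
          rw [Real.rpow_one] at h2
          exact le_trans h2 (le_max_left _ _)
      have step4 : (((s:ℝ) + k) ^ (s + k : ℕ)) ^ ((1:ℝ) / (2 * (s:ℝ))) ≤ (s:ℝ) + k := by
        rw [← Real.rpow_natCast ((s:ℝ) + k) (s + k), ← Real.rpow_mul (by linarith)]
        have hcast : ((s + k : ℕ):ℝ) = (s:ℝ) + (k:ℝ) := by push_cast; ring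
        have hkk : (k:ℝ) ≤ (s:ℝ) := by exact_mod_cast hsk
        have hexp : ((s + k : ℕ):ℝ) * ((1:ℝ) / (2 * (s:ℝ))) ≤ 1 := by
          rw [hcast, mul_one_div, div_le_one (by positivity)]
          linarith
        have h2 : ((s:ℝ) + (k:ℝ)) ^ (((s + k : ℕ):ℝ) * ((1:ℝ) / (2 * (s:ℝ)))) ≤
            ((s:ℝ) + (k:ℝ)) ^ (1:ℝ) :=
          Real.rpow_le_rpow_of_exponent_le hskpos hexp
        rwa [Real.rpow_one] at h2
      have := le_trans (step2 ▸ step1)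
        (mul_le_mul step3 step4 (Real.rpow_nonneg (by positivity) _) hMpos.le)
      exact this
    -- invert
    rw [show -(1:ℝ)/(2*(s:ℝ)) = -((1:ℝ)/(2*(s:ℝ))) by ring, Real.rpow_neg (hmpos s).le]
    exact inv_anti₀ (Real.rpow_pos_of_pos (hmpos s) _) hrle
  -- conclude by comparison with harmonic series
  intro hsum
  have hsum2 : Summable (fun s : ℕ => m (s + s0 + 1) ^ (-(1:ℝ) / (2 * ((s + s0 : ℕ):ℝ) + 2))) := by
    have := (summable_nat_add_iff s0).2 hsum
    apply this.congr
    intro s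
    congr 1 <;> push_cast <;> ring_nf
  have hsum3 : Summable (fun s : ℕ => (M * (((s + s0 + 1 : ℕ)):ℝ) + M * (k:ℝ))⁻¹) := by
    apply Summable.of_nonneg_of_le (fun s => by positivity) _ hsum2
    intro s
    have h1 := hkey (s + s0 + 1) (by omega)
    have hcast : (2:ℝ) * ((s + s0 + 1 : ℕ):ℝ) = 2 * ((s + s0 : ℕ):ℝ) + 2 := by push_cast; ring
    calc (M * (((s + s0 + 1 : ℕ)):ℝ) + M * (k:ℝ))⁻¹
        = (M * (((s + s0 + 1 : ℕ):ℝ) + (k:ℝ)))⁻¹ := by ring_nf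
      _ ≤ m (s + s0 + 1) ^ (-(1:ℝ) / (2 * ((s + s0 + 1 : ℕ):ℝ))) := h1
      _ = m (s + s0 + 1) ^ (-(1:ℝ) / (2 * ((s + s0 : ℕ):ℝ) + 2)) := by rw [← hcast]
  -- contradiction with harmonic series
  have hharm : ¬ Summable (fun s : ℕ => (M * (((s + s0 + 1 : ℕ)):ℝ) + M * (k:ℝ))⁻¹) := by
    intro hS
    have h2 : Summable (fun s : ℕ => ((s:ℝ) + ((s0:ℝ) + 1 + k))⁻¹) := by
      have := hS.mul_left M
      apply this.congr
      intro s
      have hpos : (0:ℝ) < ((s + s0 + 1:ℕ):ℝ) + (k:ℝ) := by positivity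
      field_simp
      push_cast
      ring
    have h3 : Summable (fun s : ℕ => ((s:ℝ))⁻¹) := by
      have hc : Summable (fun s : ℕ => ((s + (s0 + 1 + k) : ℕ):ℝ)⁻¹) := by
        apply h2.congr
        intro s
        push_cast
        ring_nf
      exact (summable_nat_add_iff (f := fun n : ℕ => ((n:ℝ))⁻¹) (s0 + 1 + k)).1 hc
    have := Real.not_summable_natCast_inv
    exact this h3
  exact hharm hsum3

lemma uniqueness_from_moments (m : ℕ → ℝ) (hmnn : ∀ s : ℕ, 0 ≤ m s)
    (hsummable : ∀ t : ℝ, 0 ≤ t → Summable (fun s : ℕ => t ^ s * m s / (s.factorial : ℝ)))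
    (μ₁ μ₂ : Measure ℝ) (h1 : IsProbabilityMeasure μ₁) (h2 : IsProbabilityMeasure μ₂)
    (hn1 : μ₁ (Set.Iio 0) = 0) (hn2 : μ₂ (Set.Iio 0) = 0)
    (hi1 : ∀ s : ℕ, Integrable (fun x => x ^ s) μ₁)
    (hi2 : ∀ s : ℕ, Integrable (fun x => x ^ s) μ₂)
    (hm1 : ∀ s : ℕ, ∫ x, x ^ s ∂μ₁ = m s)
    (hm2 : ∀ s : ℕ, ∫ x, x ^ s ∂μ₂ = m s) :
    μ₁ = μ₂ := by
  -- Laplace transforms agree at negative integers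
  have hlap : ∀ n : ℕ, ∫ x, Real.exp (-(n:ℝ) * x) ∂μ₁ = ∫ x, Real.exp (-(n:ℝ) * x) ∂μ₂ := by
    intro n
    have hs : Summable (fun s : ℕ => |(-(n:ℝ))| ^ s * m s / (s.factorial : ℝ)) := by
      have := hsummable (n:ℝ) (Nat.cast_nonneg n)
      apply this.congr
      intro s
      rw [abs_neg, Nat.abs_cast]
    rw [integral_exp_eq_tsum μ₁ hn1 hi1 m hm1 hmnn _ hs, integral_exp_eq_tsum μ₂ hn2 hi2 m hm2 hmnn _ hs]
  -- pushforward under e(x) = exp(-x)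
  set e : ℝ → ℝ := fun x => Real.exp (-x) with he_def
  have he_cont : Continuous e := Real.continuous_exp.comp continuous_neg
  have he_meas : Measurable e := he_cont.measurable
  have he_inj : Function.Injective e := by
    intro a b hab
    simpa [he_def, Real.exp_eq_exp] using hab
  set ν₁ : Measure ℝ := μ₁.map e with hv1_def
  set ν₂ : Measure ℝ := μ₂.map e with hv2_def
  have hp1 : IsProbabilityMeasure ν₁ := Measure.isProbabilityMeasure_map he_meas.aemeasurable
  have hp2 : IsProbabilityMeasure ν₂ := Measure.isProbabilityMeasure_map he_meas.aemeasurable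
  -- ν concentrated on Icc 0 1
  have hpre : e ⁻¹' (Set.Icc (0:ℝ) 1)ᶜ = Set.Iio 0 := by
    ext x
    simp only [Set.mem_preimage, Set.mem_compl_iff, Set.mem_Icc, Set.mem_Iio, not_and_or,
      not_le, he_def]
    constructor
    · rintro (h | h)
      · exact absurd h (not_lt.2 (Real.exp_pos _).le)
      · have := Real.exp_lt_exp.1 (show Real.exp 0 < Real.exp (-x) by rwa [Real.exp_zero])
        linarith
    · intro hx
      right
      rw [show (1:ℝ) = Real.exp 0 by rw [Real.exp_zero]]
      exact Real.exp_lt_exp.2 (by linarith)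
  have hae : ∀ (μ : Measure ℝ), μ (Set.Iio 0) = 0 →
      ∀ᵐ y ∂(μ.map e), y ∈ Set.Icc (0:ℝ) 1 := by
    intro μ hnull
    rw [ae_iff]
    rw [Measure.map_apply he_meas (by
      have : {y : ℝ | ¬ y ∈ Set.Icc (0:ℝ) 1} = (Set.Icc (0:ℝ) 1)ᶜ := rfl
      rw [this]
      exact (measurableSet_Icc).compl)]
    have : {y : ℝ | ¬ y ∈ Set.Icc (0:ℝ) 1} = (Set.Icc (0:ℝ) 1)ᶜ := rfl
    rw [this, hpre]
    exact hnull
  have hae1 : ∀ᵐ y ∂ν₁, y ∈ Set.Icc (0:ℝ) 1 := hae μ₁ hn1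
  have hae2 : ∀ᵐ y ∂ν₂, y ∈ Set.Icc (0:ℝ) 1 := hae μ₂ hn2
  -- moments of ν agree
  have hmomv : ∀ n : ℕ, ∫ y, y ^ n ∂ν₁ = ∫ y, y ^ n ∂ν₂ := by
    intro n
    have hmap : ∀ (μ : Measure ℝ), ∫ y, y ^ n ∂(μ.map e) = ∫ x, Real.exp (-(n:ℝ) * x) ∂μ := by
      intro μ
      rw [integral_map he_meas.aemeasurable (continuous_pow n).aestronglyMeasurable]
      congr 1
      funext x
      rw [he_def]
      rw [← Real.exp_nat_mul]
      congr 1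
      ring
    rw [hv1_def, hv2_def, hmap μ₁, hmap μ₂]
    exact hlap n
  -- integrability of powers w.r.t. ν
  have hint_pow : ∀ (ν : Measure ℝ) [IsProbabilityMeasure ν],
      (∀ᵐ y ∂ν, y ∈ Set.Icc (0:ℝ) 1) → ∀ n : ℕ, Integrable (fun y => y ^ n) ν := by
    intro ν _ haeν n
    apply Integrable.mono' (integrable_const (1:ℝ)) (continuous_pow n).aestronglyMeasurable
    filter_upwards [haeν] with y hy
    rw [Real.norm_eq_abs, abs_pow]
    calc |y| ^ n ≤ 1 ^ n := by
          apply pow_le_pow_left₀ (abs_nonneg y)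
          rw [abs_le]
          exact ⟨by linarith [hy.1], hy.2⟩
      _ = 1 := one_pow n
  -- polynomial integrals agree
  have hpoly : ∀ p : Polynomial ℝ, ∫ y, p.eval y ∂ν₁ = ∫ y, p.eval y ∂ν₂ := by
    intro p
    have hrw : ∀ (ν : Measure ℝ) [IsProbabilityMeasure ν],
        (∀ᵐ y ∂ν, y ∈ Set.Icc (0:ℝ) 1) →
        ∫ y, p.eval y ∂ν = ∑ i ∈ Finset.range (p.natDegree + 1), p.coeff i * ∫ y, y ^ i ∂ν := by
      intro ν _ haeν
      have : ∀ y : ℝ, p.eval y = ∑ i ∈ Finset.range (p.natDegree + 1), p.coeff i * y ^ i := by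
        intro y
        exact Polynomial.eval_eq_sum_range y
      simp_rw [this]
      rw [integral_finset_sum]
      · congr 1
        funext i
        exact integral_const_mul _ _
      · intro i _
        exact (hint_pow ν haeν i).const_mul _
    rw [hrw ν₁ hae1, hrw ν₂ hae2]
    congr 1
    funext i
    rw [hmomv i]
  -- bounded continuous functions
  have hbc : ∀ f : ℝ →ᵇ NNReal, ∫⁻ y, (f y : ENNReal) ∂ν₁ = ∫⁻ y, (f y : ENNReal) ∂ν₂ := by
    intro f
    set g : ℝ → ℝ := fun y => ((f y : NNReal) : ℝ) with hg_def
    have hg_cont : Continuous g := NNReal.continuous_coe.comp f.continuous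
    obtain ⟨C, hC⟩ := f.bounded
    have hg_bd : ∀ y, ‖g y‖ ≤ (f 0 : ℝ) + C := by
      intro y
      have := hC y 0
      rw [NNReal.dist_eq, abs_le] at this
      have hd := this
      rw [hg_def, Real.norm_eq_abs, abs_of_nonneg (f y).coe_nonneg]
      linarith [hd.2]
    have hg_int : ∀ (ν : Measure ℝ) [IsProbabilityMeasure ν], Integrable g ν := by
      intro ν _
      apply Integrable.mono' (integrable_const ((f 0 : ℝ) + C)) hg_cont.aestronglyMeasurable
      exact Filter.Eventually.of_forall hg_bd
    -- real integrals agree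
    have hreal : ∫ y, g y ∂ν₁ = ∫ y, g y ∂ν₂ := by
      by_contra hne
      set d : ℝ := ∫ y, g y ∂ν₁ - ∫ y, g y ∂ν₂ with hd_def
      have hd0 : d ≠ 0 := sub_ne_zero.2 hne
      have habs : 0 < |d| := abs_pos.2 hd0
      -- approximate by polynomial within |d|/4
      set ε : ℝ := |d| / 4 with hε_def
      have hε : 0 < ε := by positivity
      set f' : C(Set.Icc (0:ℝ) 1, ℝ) := ⟨fun y => g y, hg_cont.comp continuous_subtype_val⟩
        with hf'_def
      obtain ⟨p, hp⟩ := exists_polynomial_near_continuousMap 0 1 f' ε hε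
      have hclose : ∀ y ∈ Set.Icc (0:ℝ) 1, |p.eval y - g y| ≤ ε := by
        intro y hy
        have := (p.toContinuousMapOn (Set.Icc (0:ℝ) 1) - f').norm_coe_le_norm ⟨y, hy⟩
        have h2 : |p.eval y - g y| ≤ ‖p.toContinuousMapOn (Set.Icc (0:ℝ) 1) - f'‖ := by
          simpa [hf'_def, Real.norm_eq_abs, Polynomial.toContinuousMapOn_apply,
            Polynomial.toContinuousMap_apply] using this
        linarith [h2, le_of_lt hp]
      have hdiff : ∀ (ν : Measure ℝ) [IsProbabilityMeasure ν],
          (∀ᵐ y ∂ν, y ∈ Set.Icc (0:ℝ) 1) →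
          |∫ y, g y ∂ν - ∫ y, p.eval y ∂ν| ≤ ε := by
        intro ν _ haeν
        obtain ⟨B, hB⟩ := (isCompact_Icc (a := (0:ℝ)) (b := 1)).exists_bound_of_continuousOn
          (p.continuous.continuousOn)
        have hpint : Integrable (fun y => p.eval y) ν := by
          apply Integrable.mono' (integrable_const B) (p.continuous).aestronglyMeasurable
          filter_upwards [haeν] with y hy
          exact hB y hy
        rw [← integral_sub (hg_int ν) hpint]
        have hbound : ∀ᵐ y ∂ν, ‖g y - p.eval y‖ ≤ ε := by
          filter_upwards [haeν] with y hy
          rw [Real.norm_eq_abs, abs_sub_comm]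
          exact hclose y hy
        have := norm_integral_le_of_norm_le_const hbound
        simpa [measure_univ] using this
      have e1 := hdiff ν₁ hae1
      have e2 := hdiff ν₂ hae2
      have e3 := hpoly p
      have h4 : d = (∫ y, g y ∂ν₁ - ∫ y, p.eval y ∂ν₁) -
          (∫ y, g y ∂ν₂ - ∫ y, p.eval y ∂ν₂) := by
        rw [hd_def, e3]; ring
      have h5 : |d| ≤ ε + ε := by
        rw [h4]
        calc |(∫ y, g y ∂ν₁ - ∫ y, p.eval y ∂ν₁) - (∫ y, g y ∂ν₂ - ∫ y, p.eval y ∂ν₂)|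
            ≤ |∫ y, g y ∂ν₁ - ∫ y, p.eval y ∂ν₁| + |∫ y, g y ∂ν₂ - ∫ y, p.eval y ∂ν₂| :=
              abs_sub _ _
          _ ≤ ε + ε := add_le_add e1 e2
      rw [hε_def] at h5
      linarith
    -- upgrade to lintegral
    have hup : ∀ (ν : Measure ℝ) [IsProbabilityMeasure ν],
        ∫⁻ y, (f y : ENNReal) ∂ν = ENNReal.ofReal (∫ y, g y ∂ν) := by
      intro ν _
      rw [← lintegral_coe_eq_integral (fun y => f y) (hg_int ν)]
    rw [hup ν₁, hup ν₂, hreal]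
  -- conclude ν₁ = ν₂
  have hνeq : ν₁ = ν₂ := ext_of_forall_lintegral_eq_of_IsFiniteMeasure hbc
  -- pull back
  have he_emb : MeasurableEmbedding e := he_cont.measurableEmbedding he_inj
  ext A hA
  have h1A : μ₁ A = ν₁ (e '' A) := by
    rw [hv1_def, Measure.map_apply he_meas (he_emb.measurableSet_image.2 hA),
      Set.preimage_image_eq A he_inj]
  have h2A : μ₂ A = ν₂ (e '' A) := by
    rw [hv2_def, Measure.map_apply he_meas (he_emb.measurableSet_image.2 hA),
      Set.preimage_image_eq A he_inj]
  rw [h1A, h2A, hνeq]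

end Aux

/-- the moment sequence
`μ_s = Γ(s−lG)Γ(−lGlH−lM̄)/(Γ(−lG)Γ(slH−lGlH−lM̄))` satisfies Carleman's condition
`∑_{s≥1} μ_s^{−1/(2s)} = ∞`; in particular at most one probability distribution on
`[0,∞)` has these moments. -/
theorem carleman_condition_small_exponents
    (lG lH lM : ℝ) (hG : lG < 0) (hH0 : 0 < lH) (hH1 : lH < 1) (hM : lM ≤ 0)
    (m : ℕ → ℝ)
    (hm : ∀ s : ℕ, m s =
      Real.Gamma ((s : ℝ) - lG) * Real.Gamma (-(lG * lH) - lM) /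
        (Real.Gamma (-lG) * Real.Gamma ((s : ℝ) * lH - lG * lH - lM))) :
    (¬ Summable (fun s : ℕ => m (s + 1) ^ (-(1 : ℝ) / (2 * ((s : ℝ) + 1))))) ∧
      ∀ μ₁ μ₂ : Measure ℝ, IsProbabilityMeasure μ₁ → IsProbabilityMeasure μ₂ →
        μ₁ (Set.Iio 0) = 0 → μ₂ (Set.Iio 0) = 0 →
        (∀ s : ℕ, Integrable (fun x => x ^ s) μ₁) →
        (∀ s : ℕ, Integrable (fun x => x ^ s) μ₂) →
        (∀ s : ℕ, ∫ x, x ^ s ∂μ₁ = m s) →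
        (∀ s : ℕ, ∫ x, x ^ s ∂μ₂ = m s) →
        μ₁ = μ₂ := by
  constructor
  · exact not_summable_carleman lG lH lM hG hH0 hH1 hM m hm
  · intro μ₁ μ₂ h1 h2 hn1 hn2 hi1 hi2 hm1 hm2
    have hmnn : ∀ s : ℕ, 0 ≤ m s := by
      intro s
      rw [hm s]
      have h1' : (0:ℝ) < (s:ℝ) - lG := by
        have : (0:ℝ) ≤ (s:ℝ) := Nat.cast_nonneg s
        linarith
      have h2' : (0:ℝ) < -(lG * lH) - lM := by nlinarith
      have h3' : (0:ℝ) < (s:ℝ) * lH - lG * lH - lM := by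
        have : (0:ℝ) ≤ (s:ℝ) * lH := by positivity
        nlinarith
      have h4' : (0:ℝ) < -lG := by linarith
      exact le_of_lt (div_pos (mul_pos (Real.Gamma_pos_of_pos h1') (Real.Gamma_pos_of_pos h2'))
        (mul_pos (Real.Gamma_pos_of_pos h4') (Real.Gamma_pos_of_pos h3')))
    exact uniqueness_from_moments m hmnn
      (fun t ht => summable_series lG lH lM hG hH0 hH1 hM m hm t ht)
      μ₁ μ₂ h1 h2 hn1 hn2 hi1 hi2 hm1 hm2
end

section
/- The solution of the system ẋ_{k+1}(z) = x_{k+1}(z)^{σ+1}, ẋ_r(z) = x_r(z)^{α_r+1} x_{k+1}(z)^{β_r} for 1 ≤ r ≤ k, with initial conditions x_j(0) = x_{0,j} > 0 and α_r + β_r = σ, is given by x_{k+1}(z) = x_{0,k+1}(1 − σ x_{0,k+1}^σ z)^{−1/σ} and x_r(z) = x_{0,r}(1 − x_{0,r}^{α_r} x_{0,k+1}^{−α_r}(1 − (1 − σ x_{0,k+1}^σ z)^{α_r/σ}))^{−1/α_r}. -/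
open Real Filter


/-- the triangular-urn ODE system
`ẋ_{k+1} = x_{k+1}^{σ+1}`, `ẋ_r = x_r^{α_r+1} x_{k+1}^{β_r}` (with `α_r + β_r = σ`)
and initial conditions `x_j(0) = x_{0,j} > 0` is solved by
`x_{k+1}(z) = x_{0,k+1}(1 − σ x_{0,k+1}^σ z)^{−1/σ}` and
`x_r(z) = x_{0,r}(1 − x_{0,r}^{α_r} x_{0,k+1}^{−α_r}(1 − (1 − σ x_{0,k+1}^σ z)^{α_r/σ}))^{−1/α_r}`. -/
theorem triangular_urn_ode_solution (k : ℕ) (σ : ℝ) (hσ : 0 < σ)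
    (a b : Fin k → ℝ) (ha : ∀ r, 0 < a r) (hb : ∀ r, 0 < b r)
    (hbal : ∀ r, a r + b r = σ)
    (x0 : Fin k → ℝ) (hx0 : ∀ r, 0 < x0 r)
    (y0 : ℝ) (hy0 : 0 < y0) :
    ∃ ε : ℝ, 0 < ε ∧
      ((fun z : ℝ => y0 * (1 - σ * y0 ^ σ * z) ^ (-(1 / σ))) 0 = y0) ∧
      (∀ r : Fin k,
        (fun z : ℝ => x0 r *
          (1 - x0 r ^ a r * y0 ^ (-(a r)) *
            (1 - (1 - σ * y0 ^ σ * z) ^ (a r / σ))) ^ (-(1 / a r))) 0 = x0 r) ∧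
      ∀ z ∈ Set.Ioo (-ε) ε,
        HasDerivAt (fun z : ℝ => y0 * (1 - σ * y0 ^ σ * z) ^ (-(1 / σ)))
          ((y0 * (1 - σ * y0 ^ σ * z) ^ (-(1 / σ))) ^ (σ + 1)) z ∧
        ∀ r : Fin k,
          HasDerivAt (fun z : ℝ => x0 r *
              (1 - x0 r ^ a r * y0 ^ (-(a r)) *
                (1 - (1 - σ * y0 ^ σ * z) ^ (a r / σ))) ^ (-(1 / a r)))
            ((x0 r * (1 - x0 r ^ a r * y0 ^ (-(a r)) *
                (1 - (1 - σ * y0 ^ σ * z) ^ (a r / σ))) ^ (-(1 / a r))) ^ (a r + 1) *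
              (y0 * (1 - σ * y0 ^ σ * z) ^ (-(1 / σ))) ^ (b r)) z := by
  -- eventual positivity of u z = 1 - σ y0^σ z near 0
  have hcu : ContinuousAt (fun z : ℝ => 1 - σ * y0 ^ σ * z) 0 := by fun_prop
  have hu0 : ∀ᶠ z in nhds (0 : ℝ), 0 < 1 - σ * y0 ^ σ * z := by
    have ht : Filter.Tendsto (fun z : ℝ => 1 - σ * y0 ^ σ * z) (nhds 0) (nhds 1) := by
      have h2 : Filter.Tendsto (fun z : ℝ => 1 - σ * y0 ^ σ * z) (nhds 0)
          (nhds ((fun z : ℝ => 1 - σ * y0 ^ σ * z) 0)) := hcu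
      simpa using h2
    exact ht.eventually (eventually_gt_nhds one_pos)
  -- eventual positivity of each w r
  have hw0 : ∀ r : Fin k, ∀ᶠ z in nhds (0 : ℝ),
      0 < 1 - x0 r ^ a r * y0 ^ (-(a r)) * (1 - (1 - σ * y0 ^ σ * z) ^ (a r / σ)) := by
    intro r
    have hcw : ContinuousAt
        (fun z : ℝ => 1 - x0 r ^ a r * y0 ^ (-(a r)) *
          (1 - (1 - σ * y0 ^ σ * z) ^ (a r / σ))) 0 := by
      apply ContinuousAt.sub continuousAt_const
      apply ContinuousAt.mul continuousAt_const
      apply ContinuousAt.sub continuousAt_const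
      exact hcu.rpow_const (Or.inl (by simp))
    have ht : Filter.Tendsto
        (fun z : ℝ => 1 - x0 r ^ a r * y0 ^ (-(a r)) *
          (1 - (1 - σ * y0 ^ σ * z) ^ (a r / σ))) (nhds 0) (nhds 1) := by
      have h2 : Filter.Tendsto
          (fun z : ℝ => 1 - x0 r ^ a r * y0 ^ (-(a r)) *
            (1 - (1 - σ * y0 ^ σ * z) ^ (a r / σ))) (nhds 0)
          (nhds ((fun z : ℝ => 1 - x0 r ^ a r * y0 ^ (-(a r)) *
            (1 - (1 - σ * y0 ^ σ * z) ^ (a r / σ))) 0)) := hcw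
      simpa [Real.one_rpow] using h2
    exact ht.eventually (eventually_gt_nhds one_pos)
  have hall : ∀ᶠ z in nhds (0 : ℝ), (0 < 1 - σ * y0 ^ σ * z) ∧
      ∀ r : Fin k, 0 < 1 - x0 r ^ a r * y0 ^ (-(a r)) *
        (1 - (1 - σ * y0 ^ σ * z) ^ (a r / σ)) :=
    hu0.and (eventually_all.2 hw0)
  rw [Metric.eventually_nhds_iff] at hall
  obtain ⟨ε, hε, hball⟩ := hall
  refine ⟨ε, hε, by simp, fun r => by simp [Real.one_rpow], fun z hz => ?_⟩
  have hzb : dist z 0 < ε := by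
    rw [Real.dist_eq, sub_zero, abs_lt]
    exact ⟨hz.1, hz.2⟩
  obtain ⟨hu, hw⟩ := hball hzb
  have hu' : HasDerivAt (fun z : ℝ => 1 - σ * y0 ^ σ * z) (-(σ * y0 ^ σ * 1)) z :=
    ((hasDerivAt_id z).const_mul (σ * y0 ^ σ)).const_sub 1
  constructor
  · have h := (hu'.rpow_const (p := -(1 / σ)) (Or.inl hu.ne')).const_mul y0
    convert h using 1
    case e'_4 => rfl
    case e'_5 => rfl
    have e1 : -(1 / σ) * (σ + 1) = -(1 / σ) - 1 := by field_simp; ring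
    rw [Real.mul_rpow hy0.le (Real.rpow_nonneg hu.le _), ← Real.rpow_mul hu.le, e1,
      Real.rpow_add hy0, Real.rpow_one]
    field_simp
  · intro r
    have hA := ha r
    have hX := hx0 r
    have hwr := hw r
    have h2 := hu'.rpow_const (p := a r / σ) (Or.inl hu.ne')
    have h4 := ((h2.const_sub 1).const_mul (x0 r ^ a r * y0 ^ (-(a r)))).const_sub 1
    have h6 := (h4.rpow_const (p := -(1 / a r)) (Or.inl hwr.ne')).const_mul (x0 r)
    convert h6 using 1
    case e'_4 => rfl
    case e'_5 => rfl
    have e3 : -(1 / a r) * (a r + 1) = -(1 / a r) - 1 := by field_simp; ring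
    have e2 : a r / σ - 1 = -(1 / σ) * b r := by
      field_simp
      linarith [hbal r]
    have eB : b r = σ + -(a r) := by linarith [hbal r]
    rw [Real.mul_rpow hX.le (Real.rpow_nonneg hwr.le _), ← Real.rpow_mul hwr.le, e3,
      Real.mul_rpow hy0.le (Real.rpow_nonneg hu.le _), ← Real.rpow_mul hu.le, ← e2,
      Real.rpow_add hX, Real.rpow_one, eB, Real.rpow_add hy0]
    field_simp
end
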